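/- arXiv:math/0606636 — 3 statements merged into one kernel-verified Lean document; each statement's English description precedes it below -/
import Mathlib

section
/- Let R be an integral domain and let I be a (fractional) t-ideal of R. Then: (1) the isomorphy class of I is von Neumann regular in the t-class semigroup S_t(R) if and only if I = (I^2 (I : I^2))_t; (2) if I is t-invertible, then the isomorphy class of I is von Neumann regular in S_t(R). -/
open Pointwise

/-- The `v`-closure (divisorial closure) of a submodule `I` of the `R`-algebra `K`:
`I_v = (R : (R : I)) = 1 / (1 / I)`. -/
noncomputable def vOp (R : Type*) [CommRing R] (K : Type*) [CommRing K] [Algebra R K]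
    (I : Submodule R K) : Submodule R K :=
  1 / (1 / I)

/-- The `t`-closure of a submodule `I` of the `R`-algebra `K`:
`I_t = ∪ J_v`, `J` ranging over the nonzero finitely generated submodules contained in `I`. -/
noncomputable def tOp (R : Type*) [CommRing R] (K : Type*) [CommRing K] [Algebra R K]
    (I : Submodule R K) : Submodule R K :=
  ⨆ J ∈ {J : Submodule R K | J ≠ ⊥ ∧ J.FG ∧ J ≤ I}, vOp R K J

variable (R : Type*) [CommRing R]

/-- The image of an integral ideal of `R` in the fraction field of `R`. -/
noncomputable def idealToFrac (I : Ideal R) : Submodule R (FractionRing R) :=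
  Submodule.map (Algebra.linearMap R (FractionRing R)) I

/-- An integral ideal of `R` is a `t`-ideal if it is `t`-closed. -/
noncomputable def IsTIdeal (I : Ideal R) : Prop :=
  tOp R (FractionRing R) (idealToFrac R I) = idealToFrac R I

/-- A (nonzero) `t`-prime ideal: a nonzero prime ideal which is a `t`-ideal. -/
structure IsTPrime (P : Ideal R) : Prop where
  ne_bot : P ≠ ⊥
  isPrime : P.IsPrime
  isT : IsTIdeal R P

/-- A `t`-maximal ideal: an ideal maximal among proper integral `t`-ideals
(such an ideal is necessarily nonzero and prime). -/
structure IsTMaximal (M : Ideal R) : Prop where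
  ne_bot : M ≠ ⊥
  ne_top : M ≠ ⊤
  isPrime : M.IsPrime
  isT : IsTIdeal R M
  isMax : ∀ J : Ideal R, J ≠ ⊤ → IsTIdeal R J → M ≤ J → J = M

/-- A nonzero fractional ideal of `R` (as a submodule of the fraction field). -/
def IsFracIdeal (I : Submodule R (FractionRing R)) : Prop :=
  I ≠ ⊥ ∧ IsFractional (nonZeroDivisors R) I

/-- A nonzero fractional `t`-ideal of `R`. -/
noncomputable def IsTFracIdeal (I : Submodule R (FractionRing R)) : Prop :=
  IsFracIdeal R I ∧ tOp R (FractionRing R) I = I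

/-- `I` is `t`-invertible: `(I I⁻¹)_t = R`. -/
noncomputable def IsTInvertible (I : Submodule R (FractionRing R)) : Prop :=
  tOp R (FractionRing R) (I * ((1 : Submodule R (FractionRing R)) / I)) = 1

/-- The isomorphy class of the fractional `t`-ideal `I` is (von Neumann) regular in the
`t`-class semigroup `S_t(R)`: there are a fractional `t`-ideal `J` and a nonzero `c` in the
fraction field with `(I·I·J)_t = c I`, i.e. `x² a = x` for `x = [I]`, `a = [J]` in `S_t(R)`. -/
noncomputable def TClassRegular (I : Submodule R (FractionRing R)) : Prop :=
  ∃ J : Submodule R (FractionRing R), IsTFracIdeal R J ∧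
    ∃ c : FractionRing R, c ≠ 0 ∧ tOp R (FractionRing R) (I * I * J) = c • I

/-- `R` is Clifford `t`-regular: every element of `S_t(R)` is von Neumann regular. -/
noncomputable def IsCliffordTRegular : Prop :=
  ∀ I : Submodule R (FractionRing R), IsTFracIdeal R I → TClassRegular R I

/-- `R` is Boole `t`-regular: every element of `S_t(R)` is idempotent, i.e. `(I²)_t ≅ I`. -/
noncomputable def IsBooleTRegular : Prop :=
  ∀ I : Submodule R (FractionRing R), IsTFracIdeal R I →
    ∃ c : FractionRing R, c ≠ 0 ∧ tOp R (FractionRing R) (I * I) = c • I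

/-- `R` is Clifford regular: every element of the class semigroup `S(R)` is regular. -/
def IsCliffordRegular : Prop :=
  ∀ I : Submodule R (FractionRing R), IsFracIdeal R I →
    ∃ J : Submodule R (FractionRing R), IsFracIdeal R J ∧
      ∃ c : FractionRing R, c ≠ 0 ∧ I * I * J = c • I

/-- `R` is Boole regular: every element of the class semigroup `S(R)` is idempotent. -/
def IsBooleRegular : Prop :=
  ∀ I : Submodule R (FractionRing R), IsFracIdeal R I →
    ∃ c : FractionRing R, c ≠ 0 ∧ I * I = c • I

/-- `R` is a Prüfer `v`-multiplication domain: the localization at every `t`-maximal ideal is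
a valuation domain. -/
noncomputable def IsPVMD [IsDomain R] : Prop :=
  ∀ M : Ideal R, ∀ hM : IsTMaximal R M,
    haveI := hM.isPrime
    haveI : IsDomain (Localization.AtPrime M) :=
      IsLocalization.isDomain_of_local_atPrime hM.isPrime
    ValuationRing (Localization.AtPrime M)

/-- `R` is `t`-almost Dedekind: the localization at every `t`-maximal ideal is a rank-one
discrete valuation ring. -/
noncomputable def IsTAlmostDedekind [IsDomain R] : Prop :=
  ∀ M : Ideal R, ∀ hM : IsTMaximal R M,
    haveI := hM.isPrime
    haveI : IsDomain (Localization.AtPrime M) :=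
      IsLocalization.isDomain_of_local_atPrime hM.isPrime
    IsDiscreteValuationRing (Localization.AtPrime M)

/-- `R` is strongly `t`-discrete: `(P²)_t ⊊ P` for every `t`-prime ideal `P`, i.e. there are
no `t`-idempotent `t`-prime ideals. -/
noncomputable def IsStronglyTDiscrete : Prop :=
  ∀ P : Ideal R, IsTPrime R P →
    tOp R (FractionRing R) (idealToFrac R (P * P)) < idealToFrac R P

/-- `R` is completely integrally closed (in its fraction field). -/
def IsCompletelyIntegrallyClosed : Prop :=
  ∀ x : FractionRing R,
    (∃ c : R, c ≠ 0 ∧ ∀ n : ℕ, ∃ r : R,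
      algebraMap R (FractionRing R) c * x ^ n = algebraMap R (FractionRing R) r) →
    ∃ r : R, algebraMap R (FractionRing R) r = x

/-- `R` is a Krull domain, via the classical characterization: every nonzero integral ideal
is `t`-invertible. -/
noncomputable def IsKrull : Prop :=
  ∀ I : Ideal R, I ≠ ⊥ → IsTInvertible R (idealToFrac R I)

/-- `R` is a Prüfer domain: every nonzero finitely generated ideal is invertible. -/
noncomputable def IsPrufer : Prop :=
  ∀ I : Ideal R, I ≠ ⊥ → I.FG →
    idealToFrac R I * ((1 : Submodule R (FractionRing R)) / idealToFrac R I) = 1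

/-- `R` has finite character: every nonzero nonunit lies in only finitely many maximal ideals. -/
def HasFiniteCharacter : Prop :=
  ∀ x : R, x ≠ 0 → ¬ IsUnit x → {M : Ideal R | M.IsMaximal ∧ x ∈ M}.Finite

/-- `R` has finite `t`-character: every nonzero nonunit lies in only finitely many
`t`-maximal ideals. -/
noncomputable def HasFiniteTCharacter : Prop :=
  ∀ x : R, x ≠ 0 → ¬ IsUnit x → {M : Ideal R | IsTMaximal R M ∧ x ∈ M}.Finite

/-- A Krull-type domain: a PVMD of finite `t`-character. -/
noncomputable def IsKrullType [IsDomain R] : Prop :=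
  IsPVMD R ∧ HasFiniteTCharacter R

/-- `R` is pseudo-integrally closed: `(I_t : I_t) = R` for every nonzero finitely generated
integral ideal `I` (equivalently, `R = ∪ (I_t : I_t)`). -/
noncomputable def IsPseudoIntegrallyClosed : Prop :=
  ∀ I : Ideal R, I ≠ ⊥ → I.FG →
    tOp R (FractionRing R) (idealToFrac R I) / tOp R (FractionRing R) (idealToFrac R I) = 1

/-- The localization `I R_S` of a submodule `I` of the `R`-algebra `K` at a multiplicative
subset `S` of `R`, as a subset of `K`: the set of `x` with `s x ∈ I` for some `s ∈ S`. -/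
def locSub (S : Submonoid R) {K : Type*} [CommRing K] [Algebra R K]
    (I : Submodule R K) : Submodule R K where
  carrier := {x : K | ∃ s ∈ S, (s : R) • x ∈ I}
  zero_mem' := ⟨1, S.one_mem, by simp⟩
  add_mem' := by
    rintro a b ⟨s, hs, ha⟩ ⟨t, ht, hb⟩
    refine ⟨s * t, S.mul_mem hs ht, ?_⟩
    rw [smul_add]
    exact Submodule.add_mem _
      (by rw [mul_comm, mul_smul]; exact I.smul_mem t ha)
      (by rw [mul_smul]; exact I.smul_mem s hb)
  smul_mem' := by
    rintro r x ⟨s, hs, hx⟩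
    exact ⟨s, hs, by rw [smul_comm]; exact I.smul_mem r hx⟩

/-- `M ∈ T_t(R)`: `M` is a `t`-maximal ideal such that `R_M` does not contain
`∩_{N ≠ M} R_N` (all viewed inside the fraction field). -/
noncomputable def InTt (M : Ideal R) : Prop :=
  ∃ hM : IsTMaximal R M,
    ¬ ((⨅ N : {N : Ideal R // IsTMaximal R N ∧ N ≠ M},
          locSub R (@Ideal.primeCompl R _ N.1 N.2.1.isPrime)
            (1 : Submodule R (FractionRing R))) ≤
        locSub R (@Ideal.primeCompl R _ M hM.isPrime) (1 : Submodule R (FractionRing R)))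

/-- The overring `(A : A)` of all multipliers of `A`, as a subalgebra of the fraction field. -/
noncomputable def stabRing (A : Submodule R (FractionRing R)) :
    Subalgebra R (FractionRing R) :=
  Submodule.toSubalgebra (A / A)
    (Submodule.mem_div_iff_forall_mul_mem.2 fun y hy => by rwa [one_mul])
    (fun x y hx hy => Submodule.mem_div_iff_forall_mul_mem.2 fun z hz => by
      rw [mul_assoc]
      exact Submodule.mem_div_iff_forall_mul_mem.1 hx _
        (Submodule.mem_div_iff_forall_mul_mem.1 hy _ hz))


section TAux

open Pointwise

variable {R₀ : Type*} [CommRing R₀] {F : Type*} [Field F] [Algebra R₀ F]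

theorem TAux.div_le_div {A B C : Submodule R₀ F} (h : A ≤ B) : C / B ≤ C / A :=
  fun _x hx => Submodule.mem_div_iff_forall_mul_mem.2 fun y hy =>
    Submodule.mem_div_iff_forall_mul_mem.1 hx y (h hy)

theorem TAux.le_vOp (A : Submodule R₀ F) : A ≤ vOp R₀ F A := fun x hx =>
  Submodule.mem_div_iff_forall_mul_mem.2 fun y hy => by
    rw [mul_comm]; exact Submodule.mem_div_iff_forall_mul_mem.1 hy x hx

theorem TAux.vOp_mono {A B : Submodule R₀ F} (h : A ≤ B) : vOp R₀ F A ≤ vOp R₀ F B :=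
  TAux.div_le_div (TAux.div_le_div h)

theorem TAux.one_div_one_div_one_div (A : Submodule R₀ F) : 1/(1/(1/A)) = 1/A :=
  le_antisymm (TAux.div_le_div (TAux.le_vOp A)) (TAux.le_vOp (1/A))

theorem TAux.vOp_vOp (A : Submodule R₀ F) : vOp R₀ F (vOp R₀ F A) = vOp R₀ F A := by
  show 1/(1/(1/(1/A))) = 1/(1/A)
  rw [TAux.one_div_one_div_one_div]

theorem TAux.vOp_le_tOp {A J : Submodule R₀ F} (h1 : J ≠ ⊥) (h2 : J.FG) (h3 : J ≤ A) :
    vOp R₀ F J ≤ tOp R₀ F A :=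
  le_iSup₂_of_le J ⟨h1, h2, h3⟩ le_rfl

theorem TAux.tOp_le {A M : Submodule R₀ F}
    (h : ∀ J : Submodule R₀ F, J ≠ ⊥ → J.FG → J ≤ A → vOp R₀ F J ≤ M) :
    tOp R₀ F A ≤ M :=
  iSup₂_le fun J hJ => h J hJ.1 hJ.2.1 hJ.2.2

theorem TAux.le_tOp (A : Submodule R₀ F) : A ≤ tOp R₀ F A := by
  intro x hx
  by_cases hx0 : x = 0
  · simpa [hx0] using (tOp R₀ F A).zero_mem
  · exact TAux.vOp_le_tOp (by simpa using hx0)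
      (Submodule.fg_span_singleton x)
      ((Submodule.span_singleton_le_iff_mem x A).2 hx)
      (TAux.le_vOp _ (Submodule.mem_span_singleton_self x))

theorem TAux.tOp_mono {A B : Submodule R₀ F} (h : A ≤ B) : tOp R₀ F A ≤ tOp R₀ F B :=
  TAux.tOp_le fun _J h1 h2 h3 => TAux.vOp_le_tOp h1 h2 (h3.trans h)

theorem TAux.tOp_le_vOp (A : Submodule R₀ F) : tOp R₀ F A ≤ vOp R₀ F A :=
  TAux.tOp_le fun _J _ _ h3 => TAux.vOp_mono h3

theorem TAux.tOp_bot : tOp R₀ F (⊥ : Submodule R₀ F) = ⊥ :=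
  le_bot_iff.1 <| TAux.tOp_le fun _J h1 _ h3 => absurd (le_bot_iff.1 h3) h1

theorem TAux.mem_psmul {c : F} {S : Submodule R₀ F} {x : F} :
    x ∈ c • S ↔ ∃ y ∈ S, c • y = x := by
  rw [← SetLike.mem_coe, Submodule.coe_pointwise_smul]
  exact Set.mem_smul_set

theorem TAux.smul_mono {c : F} {A B : Submodule R₀ F} (h : A ≤ B) : c • A ≤ c • B :=
  Submodule.map_mono h

theorem TAux.smul_fg {c : F} {A : Submodule R₀ F} (h : A.FG) : (c • A).FG :=
  h.map _

theorem TAux.smul_smul_cancel {c : F} (hc : c ≠ 0) (A : Submodule R₀ F) :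
    c⁻¹ • c • A = A := by
  rw [smul_smul, inv_mul_cancel₀ hc, one_smul]

theorem TAux.smul_smul_cancel' {c : F} (hc : c ≠ 0) (A : Submodule R₀ F) :
    c • c⁻¹ • A = A := by
  rw [smul_smul, mul_inv_cancel₀ hc, one_smul]

theorem TAux.smul_ne_bot {c : F} (hc : c ≠ 0) {A : Submodule R₀ F} (hA : A ≠ ⊥) :
    c • A ≠ ⊥ := by
  obtain ⟨a, ha, ha0⟩ := Submodule.exists_mem_ne_zero_of_ne_bot hA
  exact (Submodule.ne_bot_iff _).2 ⟨c • a, Submodule.smul_mem_pointwise_smul a c A ha,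
    by simpa [smul_eq_mul] using mul_ne_zero hc ha0⟩

theorem TAux.one_div_smul {c : F} (hc : c ≠ 0) (A : Submodule R₀ F) :
    (1 : Submodule R₀ F) / (c • A) = c⁻¹ • (1 / A) := by
  ext x
  rw [TAux.mem_psmul, Submodule.mem_div_iff_forall_mul_mem]
  constructor
  · intro h
    refine ⟨c * x, Submodule.mem_div_iff_forall_mul_mem.2 fun a ha => ?_, by
      rw [smul_eq_mul, inv_mul_cancel_left₀ hc]⟩
    have := h (c • a) (Submodule.smul_mem_pointwise_smul a c A ha)
    rw [smul_eq_mul] at this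
    convert this using 1; ring
  · rintro ⟨y, hy, rfl⟩ z hz
    obtain ⟨a, ha, rfl⟩ := TAux.mem_psmul.1 hz
    have := Submodule.mem_div_iff_forall_mul_mem.1 hy a ha
    have hxz : c⁻¹ • y * c • a = y * a := by
      rw [smul_eq_mul, smul_eq_mul]
      field_simp
    rwa [hxz]

theorem TAux.vOp_smul {c : F} (hc : c ≠ 0) (A : Submodule R₀ F) :
    vOp R₀ F (c • A) = c • vOp R₀ F A := by
  show 1 / (1 / (c • A)) = c • (1 / (1 / A))
  rw [TAux.one_div_smul hc, TAux.one_div_smul (inv_ne_zero hc), inv_inv]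

theorem TAux.tOp_smul_le {c : F} (hc : c ≠ 0) (A : Submodule R₀ F) :
    tOp R₀ F (c • A) ≤ c • tOp R₀ F A := by
  refine TAux.tOp_le fun J h1 h2 h3 => ?_
  have hJ : J = c • (c⁻¹ • J) := (TAux.smul_smul_cancel' hc J).symm
  have hle : c⁻¹ • J ≤ A := by
    have := TAux.smul_mono (c := c⁻¹) h3
    rwa [TAux.smul_smul_cancel hc] at this
  have hnb : c⁻¹ • J ≠ ⊥ := by
    intro h0
    rw [h0, Submodule.smul_bot'] at hJ
    exact h1 hJ
  calc vOp R₀ F J = c • vOp R₀ F (c⁻¹ • J) := by rw [← TAux.vOp_smul hc, ← hJ]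
    _ ≤ c • tOp R₀ F A := TAux.smul_mono (TAux.vOp_le_tOp hnb (TAux.smul_fg h2) hle)

theorem TAux.tOp_smul {c : F} (hc : c ≠ 0) (A : Submodule R₀ F) :
    tOp R₀ F (c • A) = c • tOp R₀ F A := by
  refine le_antisymm (TAux.tOp_smul_le hc A) ?_
  have := TAux.tOp_smul_le (inv_ne_zero hc) (c • A)
  rw [TAux.smul_smul_cancel hc] at this
  have := TAux.smul_mono (c := c) this
  rwa [TAux.smul_smul_cancel' hc] at this

theorem TAux.mul_tOp_le (A B : Submodule R₀ F) :
    A * tOp R₀ F B ≤ tOp R₀ F (A * B) := by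
  refine Submodule.mul_le.2 fun a ha x hx => ?_
  by_cases ha0 : a = 0
  · simpa [ha0] using (tOp R₀ F (A * B)).zero_mem
  · have : tOp R₀ F B ≤ Submodule.comap (LinearMap.mulLeft R₀ a) (tOp R₀ F (A * B)) := by
      refine TAux.tOp_le fun J h1 h2 h3 => ?_
      intro y hy
      have hmem : a • J ≤ A * B := by
        intro z hz
        obtain ⟨j, hj, rfl⟩ := TAux.mem_psmul.1 hz
        rw [smul_eq_mul]
        exact Submodule.mul_mem_mul ha (h3 hj)
      show a * y ∈ tOp R₀ F (A * B)
      have : a * y ∈ vOp R₀ F (a • J) := by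
        rw [TAux.vOp_smul ha0]
        exact TAux.mem_psmul.2 ⟨y, hy, by rw [smul_eq_mul]⟩
      exact TAux.vOp_le_tOp (TAux.smul_ne_bot ha0 h1) (TAux.smul_fg h2) hmem this
    exact this hx

theorem TAux.tOp_closure {X Y : Submodule R₀ F} (h : X ≤ tOp R₀ F Y) :
    tOp R₀ F X ≤ tOp R₀ F Y := by
  by_cases hY : Y = ⊥
  · subst hY
    rw [TAux.tOp_bot] at h ⊢
    rw [le_bot_iff.1 h, TAux.tOp_bot]
  · refine TAux.tOp_le fun J h1 h2 h3 => ?_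
    set S : Set (Submodule R₀ F) := {J' | J' ≠ ⊥ ∧ J'.FG ∧ J' ≤ Y} with hS
    have hTY : tOp R₀ F Y = sSup (vOp R₀ F '' S) := by
      rw [sSup_image]; rfl
    obtain ⟨y0, hy0, hy00⟩ := Submodule.exists_mem_ne_zero_of_ne_bot hY
    have hne : (vOp R₀ F '' S).Nonempty := by
      refine ⟨vOp R₀ F (Submodule.span R₀ {y0}), ⟨_, ⟨?_, Submodule.fg_span_singleton y0,
        (Submodule.span_singleton_le_iff_mem y0 Y).2 hy0⟩, rfl⟩⟩
      simpa using hy00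
    have hdir : DirectedOn (· ≤ ·) (vOp R₀ F '' S) := by
      rintro _ ⟨J₁, hJ₁, rfl⟩ _ ⟨J₂, hJ₂, rfl⟩
      refine ⟨vOp R₀ F (J₁ ⊔ J₂), ⟨J₁ ⊔ J₂, ⟨?_, hJ₁.2.1.sup hJ₂.2.1, sup_le hJ₁.2.2 hJ₂.2.2⟩, rfl⟩,
        TAux.vOp_mono le_sup_left, TAux.vOp_mono le_sup_right⟩
      intro hb
      exact hJ₁.1 (le_bot_iff.1 (hb ▸ le_sup_left))
    have hcomp := (Submodule.fg_iff_compact J).1 h2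
    rw [CompleteLattice.isCompactElement_iff_le_of_directed_sSup_le] at hcomp
    obtain ⟨x, hxS, hJx⟩ := hcomp _ hne hdir (by rw [← hTY]; exact (h3.trans h))
    obtain ⟨J', hJ', rfl⟩ := hxS
    calc vOp R₀ F J ≤ vOp R₀ F (vOp R₀ F J') := TAux.vOp_mono hJx
      _ = vOp R₀ F J' := TAux.vOp_vOp J'
      _ ≤ tOp R₀ F Y := TAux.vOp_le_tOp hJ'.1 hJ'.2.1 hJ'.2.2

theorem TAux.mul_mono_right {A B C : Submodule R₀ F} (h : B ≤ C) : A * B ≤ A * C :=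
  Submodule.mul_le.2 fun a ha b hb => Submodule.mul_mem_mul ha (h hb)

theorem TAux.tOp_mul_tOp (A B : Submodule R₀ F) :
    tOp R₀ F (A * tOp R₀ F B) = tOp R₀ F (A * B) :=
  le_antisymm (TAux.tOp_closure (TAux.mul_tOp_le A B))
    (TAux.tOp_mono (TAux.mul_mono_right (TAux.le_tOp B)))

theorem TAux.div_tClosed {A B : Submodule R₀ F} (hA : tOp R₀ F A = A) :
    tOp R₀ F (A / B) = A / B := by
  refine le_antisymm (TAux.tOp_le fun J h1 h2 h3 => ?_) (TAux.le_tOp _)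
  intro x hx
  refine Submodule.mem_div_iff_forall_mul_mem.2 fun b hb => ?_
  by_cases hb0 : b = 0
  · simpa [hb0] using (A).zero_mem
  · have hbJ : b • J ≤ A := by
      intro z hz
      obtain ⟨j, hj, rfl⟩ := TAux.mem_psmul.1 hz
      rw [smul_eq_mul, mul_comm]
      exact Submodule.mem_div_iff_forall_mul_mem.1 (h3 hj) b hb
    have : x * b ∈ vOp R₀ F (b • J) := by
      rw [TAux.vOp_smul hb0]
      exact TAux.mem_psmul.2 ⟨x, hx, by rw [smul_eq_mul, mul_comm]⟩
    have := TAux.vOp_le_tOp (TAux.smul_ne_bot hb0 h1) (TAux.smul_fg h2) hbJ this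
    rwa [hA] at this

end TAux

/-- **Lemma 2.1.** Let `I` be a (nonzero fractional) `t`-ideal of a domain `R`. Then
(1) the class of `I` is regular in `S_t(R)` iff `I = (I²(I : I²))_t`;
(2) if `I` is `t`-invertible then the class of `I` is regular in `S_t(R)`. -/
theorem tClassRegular_iff_and_of_tInvertible (R : Type*) [CommRing R] [IsDomain R]
    (I : Submodule R (FractionRing R)) (hI : IsTFracIdeal R I) :
    (TClassRegular R I ↔ I = tOp R (FractionRing R) (I * I * (I / (I * I)))) ∧
    (IsTInvertible R I → TClassRegular R I) := by
  obtain ⟨⟨hIne, hIfrac⟩, hIt⟩ := hI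
  obtain ⟨d, hd, hdint⟩ := hIfrac
  set δ : FractionRing R := algebraMap R (FractionRing R) d with hδdef
  have hδ : δ ≠ 0 := by
    simpa [hδdef] using
      (IsFractionRing.to_map_ne_zero_of_mem_nonZeroDivisors (K := FractionRing R) hd)
  obtain ⟨a, haI, ha0⟩ := Submodule.exists_mem_ne_zero_of_ne_bot hIne
  have hδI : ∀ x ∈ I, ∃ u : R, algebraMap R (FractionRing R) u = δ * x := by
    intro x hx
    obtain ⟨u, hu⟩ := hdint x hx
    exact ⟨u, by rw [hu, Algebra.smul_def]⟩
  obtain ⟨r, hr⟩ := hδI a haI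
  have hr0 : r ≠ 0 := by
    intro h0
    rw [h0, map_zero] at hr
    exact mul_ne_zero hδ ha0 hr.symm
  -- δ is a nonzero element of I / (I * I)
  have hδdiv : δ ∈ I / (I * I) := by
    refine Submodule.mem_div_iff_forall_mul_mem.2 fun z hz => ?_
    refine Submodule.mul_induction_on hz (fun x hx y hy => ?_) (fun u v hu hv => ?_)
    · obtain ⟨u, hu⟩ := hδI x hx
      rw [← mul_assoc, ← hu, ← Algebra.smul_def]
      exact I.smul_mem u hy
    · rw [mul_add]
      exact Submodule.add_mem _ hu hv
  -- δ is a nonzero element of 1 / I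
  have hδone : δ ∈ (1 : Submodule R (FractionRing R)) / I := by
    refine Submodule.mem_div_iff_forall_mul_mem.2 fun y hy => ?_
    obtain ⟨u, hu⟩ := hδI y hy
    exact Submodule.mem_one.2 ⟨u, hu⟩
  -- I / (I * I) is a nonzero fractional t-ideal
  have hfrac1 : IsTFracIdeal R (I / (I * I)) := by
    refine ⟨⟨(Submodule.ne_bot_iff _).2 ⟨δ, hδdiv, hδ⟩, ⟨d * (r * r), ?_, fun x hx => ?_⟩⟩,
      TAux.div_tClosed hIt⟩
    · exact mem_nonZeroDivisors_of_ne_zero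
        (mul_ne_zero (nonZeroDivisors.ne_zero hd) (mul_ne_zero hr0 hr0))
    · have hxa : x * (a * a) ∈ I :=
        Submodule.mem_div_iff_forall_mul_mem.1 hx (a * a) (Submodule.mul_mem_mul haI haI)
      obtain ⟨u, hu⟩ := hδI _ hxa
      refine ⟨d * d * u, ?_⟩
      calc algebraMap R (FractionRing R) (d * d * u)
          = δ * δ * algebraMap R (FractionRing R) u := by rw [map_mul, map_mul]
        _ = δ * δ * (δ * (x * (a * a))) := by rw [hu]
        _ = δ * (δ * a) * (δ * a) * x := by ring
        _ = algebraMap R (FractionRing R) (d * (r * r)) * x := by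
            rw [map_mul, map_mul, ← hr]; ring
        _ = (d * (r * r)) • x := (Algebra.smul_def _ _).symm
  -- 1 / I is a nonzero fractional t-ideal
  have hfrac2 : IsTFracIdeal R ((1 : Submodule R (FractionRing R)) / I) := by
    refine ⟨⟨(Submodule.ne_bot_iff _).2 ⟨δ, hδone, hδ⟩, ⟨r, mem_nonZeroDivisors_of_ne_zero hr0,
      fun x hx => ?_⟩⟩, ?_⟩
    · have hxa : x * a ∈ (1 : Submodule R (FractionRing R)) :=
        Submodule.mem_div_iff_forall_mul_mem.1 hx a haI
      obtain ⟨u, hu⟩ := Submodule.mem_one.1 hxa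
      refine ⟨d * u, ?_⟩
      calc algebraMap R (FractionRing R) (d * u)
          = δ * algebraMap R (FractionRing R) u := by rw [map_mul]
        _ = δ * (x * a) := by rw [hu]
        _ = (δ * a) * x := by ring
        _ = algebraMap R (FractionRing R) r * x := by rw [hr]
        _ = r • x := (Algebra.smul_def _ _).symm
    · refine le_antisymm ((TAux.tOp_le_vOp _).trans_eq ?_) (TAux.le_tOp _)
      exact TAux.one_div_one_div_one_div I
  refine ⟨⟨fun hreg => ?_, fun heq => ?_⟩, fun hinv => ?_⟩
  · -- regular → I = (I²(I : I²))_t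
    obtain ⟨J, hJ, c, hc, hEq⟩ := hreg
    refine le_antisymm ?_ ((TAux.tOp_mono (Submodule.mul_le.2 fun z hz w hw => by
      rw [mul_comm]
      exact Submodule.mem_div_iff_forall_mul_mem.1 hw z hz)).trans_eq hIt)
    have hsub : c⁻¹ • J ≤ I / (I * I) := by
      intro x hx
      refine Submodule.mem_div_iff_forall_mul_mem.2 fun z hz => ?_
      have h1 : x * z ∈ (c⁻¹ • J) * (I * I) := Submodule.mul_mem_mul hx hz
      have h2 : (c⁻¹ • J) * (I * I) = c⁻¹ • (I * I * J) := by
        rw [smul_mul_assoc, mul_comm J]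
      rw [h2] at h1
      have h3 : c⁻¹ • (I * I * J) ≤ c⁻¹ • (c • I) :=
        TAux.smul_mono ((TAux.le_tOp _).trans hEq.le)
      rw [TAux.smul_smul_cancel hc] at h3
      exact h3 h1
    calc I = c⁻¹ • (c • I) := (TAux.smul_smul_cancel hc I).symm
      _ = c⁻¹ • tOp R (FractionRing R) (I * I * J) := by rw [hEq]
      _ = tOp R (FractionRing R) (c⁻¹ • (I * I * J)) := (TAux.tOp_smul (inv_ne_zero hc) _).symm
      _ = tOp R (FractionRing R) ((I * I) * (c⁻¹ • J)) := by rw [mul_smul_comm]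
      _ ≤ tOp R (FractionRing R) (I * I * (I / (I * I))) :=
          TAux.tOp_mono (TAux.mul_mono_right hsub)
  · -- I = (I²(I : I²))_t → regular
    exact ⟨I / (I * I), hfrac1, 1, one_ne_zero, by rw [one_smul]; exact heq.symm⟩
  · -- t-invertible → regular
    refine ⟨(1 : Submodule R (FractionRing R)) / I, hfrac2, 1, one_ne_zero, ?_⟩
    rw [one_smul, mul_assoc, ← TAux.tOp_mul_tOp, hinv, mul_one, hIt]
end

section
/- Let R be a Clifford (resp., Boole) t-regular integral domain. Then: (1) for any multiplicative subset S of R, the localization R_S is Clifford (resp., Boole) t-regular; (2) for any nonzero ideal I of R, the ring (I_v : I_v) is Clifford (resp., Boole) t-regular. -/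
open Pointwise

variable (R : Type*) [CommRing R]

namespace Prop25

section Generic

variable {A : Type*} [CommRing A] {K : Type*} [Field K] [Algebra A K]

theorem div_le_div_gen {X Y Z : Submodule A K} (h : X ≤ Y) : Z / Y ≤ Z / X := fun z hz =>
  Submodule.mem_div_iff_forall_mul_mem.2 fun y hy =>
    Submodule.mem_div_iff_forall_mul_mem.1 hz y (h hy)

theorem le_one_div_one_div (X : Submodule A K) : X ≤ 1 / (1 / X) := fun x hx =>
  Submodule.mem_div_iff_forall_mul_mem.2 fun y hy => by
    rw [mul_comm]; exact Submodule.mem_div_iff_forall_mul_mem.1 hy x hx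

theorem one_div_one_div_one_div (X : Submodule A K) : 1 / (1 / (1 / X)) = 1 / X :=
  le_antisymm (div_le_div_gen (le_one_div_one_div X)) (le_one_div_one_div (1 / X))

theorem le_vOp (X : Submodule A K) : X ≤ vOp A K X := le_one_div_one_div X

theorem vOp_mono {X Y : Submodule A K} (h : X ≤ Y) : vOp A K X ≤ vOp A K Y :=
  div_le_div_gen (div_le_div_gen h)

theorem vOp_vOp (X : Submodule A K) : vOp A K (vOp A K X) = vOp A K X := by
  show (1 : Submodule A K) / (1 / (1 / (1 / X))) = 1 / (1 / X)
  rw [one_div_one_div_one_div]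

theorem one_div_one : (1 : Submodule A K) / 1 = 1 := by
  apply le_antisymm
  · intro z hz
    simpa using Submodule.mem_div_iff_forall_mul_mem.1 hz 1 (Submodule.one_le.1 le_rfl)
  · intro z hz
    exact Submodule.mem_div_iff_forall_mul_mem.2 fun y hy => by
      have := Submodule.mul_mem_mul hz hy
      rwa [mul_one] at this

theorem vOp_one : vOp A K (1 : Submodule A K) = 1 := by
  show (1 : Submodule A K) / (1 / 1) = 1
  rw [one_div_one, one_div_one]

theorem smul_submodule_mono {c : K} {X Y : Submodule A K} (h : X ≤ Y) : c • X ≤ c • Y :=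
  Submodule.map_mono h

theorem one_div_smul {c : K} (hc : c ≠ 0) (X : Submodule A K) :
    (1 : Submodule A K) / (c • X) = c⁻¹ • ((1 : Submodule A K) / X) := by
  ext z
  rw [Submodule.mem_smul_iff_inv_mul_mem (inv_ne_zero hc), inv_inv,
    Submodule.mem_div_iff_forall_mul_mem, Submodule.mem_div_iff_forall_mul_mem]
  constructor
  · intro h y hy
    have := h (c • y) (Submodule.smul_mem_pointwise_smul y c X hy)
    rw [smul_eq_mul] at this
    rw [show c * z * y = z * (c * y) by ring]
    exact this
  · intro h y hy
    rcases (Submodule.mem_smul_iff_inv_mul_mem hc).1 hy with hy'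
    have := h (c⁻¹ * y) hy'
    rw [show c * z * (c⁻¹ * y) = (c * c⁻¹) * (z * y) by ring, mul_inv_cancel₀ hc,
      one_mul] at this
    exact this

theorem smul_smul_submodule (c d : K) (X : Submodule A K) : c • d • X = (c * d) • X := by
  rw [smul_smul]

theorem vOp_smul {c : K} (hc : c ≠ 0) (X : Submodule A K) :
    vOp A K (c • X) = c • vOp A K X := by
  show (1 : Submodule A K) / (1 / (c • X)) = c • (1 / (1 / X))
  rw [one_div_smul hc, one_div_smul (inv_ne_zero hc), inv_inv]

theorem smul_eq_bot_iff {c : K} (hc : c ≠ 0) {X : Submodule A K} : c • X = ⊥ ↔ X = ⊥ := by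
  constructor
  · intro h
    rw [eq_bot_iff] at h ⊢
    intro x hx
    have : c • x ∈ c • X := Submodule.smul_mem_pointwise_smul x c X hx
    have := h this
    simp only [Submodule.mem_bot] at this ⊢
    rcases smul_eq_zero.1 this with h' | h'
    · exact absurd h' hc
    · exact h'
  · rintro rfl
    exact Submodule.map_bot _

theorem smul_fg {c : K} {X : Submodule A K} (h : X.FG) : (c • X).FG :=
  Submodule.FG.map _ h

end Generic
section Generic2

variable {A : Type*} [CommRing A] {K : Type*} [Field K] [Algebra A K]

theorem vOp_le_tOp {J X : Submodule A K} (hb : J ≠ ⊥) (hfg : J.FG) (hle : J ≤ X) :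
    vOp A K J ≤ tOp A K X :=
  le_iSup₂_of_le J (⟨hb, hfg, hle⟩ : J ∈ {J : Submodule A K | J ≠ ⊥ ∧ J.FG ∧ J ≤ X}) le_rfl

theorem tOp_mono {X Y : Submodule A K} (h : X ≤ Y) : tOp A K X ≤ tOp A K Y :=
  iSup₂_le fun J hJ => vOp_le_tOp hJ.1 hJ.2.1 (hJ.2.2.trans h)

theorem le_tOp (X : Submodule A K) : X ≤ tOp A K X := by
  intro x hx
  by_cases hx0 : x = 0
  · subst hx0; exact zero_mem _
  · refine vOp_le_tOp (J := Submodule.span A {x}) ?_ (Submodule.fg_span_singleton x) ?_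
      (le_vOp _ (Submodule.mem_span_singleton_self x))
    · simpa [Submodule.span_singleton_eq_bot] using hx0
    · rw [Submodule.span_le]; simpa using hx

theorem tOp_bot : tOp A K (⊥ : Submodule A K) = ⊥ :=
  le_bot_iff.1 <| iSup₂_le fun _ hJ => (hJ.1 (le_bot_iff.1 hJ.2.2)).elim

theorem exists_of_mem_tOp {X : Submodule A K} {x : K} (hx : x ∈ tOp A K X) (hx0 : x ≠ 0) :
    ∃ J, (J ≠ ⊥ ∧ J.FG ∧ J ≤ X) ∧ x ∈ vOp A K J := by
  have hXb : X ≠ ⊥ := by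
    rintro rfl
    rw [tOp_bot] at hx
    exact hx0 (Submodule.mem_bot A |>.1 hx)
  obtain ⟨x₀, hx₀X, hx₀⟩ := Submodule.exists_mem_ne_zero_of_ne_bot hXb
  set s := {J : Submodule A K | J ≠ ⊥ ∧ J.FG ∧ J ≤ X} with hs
  have hne : (Submodule.span A {x₀}) ∈ s :=
    ⟨by simpa [Submodule.span_singleton_eq_bot] using hx₀,
     Submodule.fg_span_singleton _, by rw [Submodule.span_le]; simpa using hx₀X⟩
  haveI : Nonempty s := ⟨⟨_, hne⟩⟩
  have hdir : Directed (· ≤ ·) (fun p : s => vOp A K p.1) := by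
    rintro ⟨J₁, h₁⟩ ⟨J₂, h₂⟩
    refine ⟨⟨J₁ ⊔ J₂, ⟨fun h => h₁.1 (sup_eq_bot_iff.1 h).1, h₁.2.1.sup h₂.2.1,
      sup_le h₁.2.2 h₂.2.2⟩⟩, vOp_mono le_sup_left, vOp_mono le_sup_right⟩
  rw [tOp, iSup_subtype'] at hx
  obtain ⟨⟨J, hJ⟩, hxJ⟩ := (Submodule.mem_iSup_of_directed _ hdir).1 hx
  exact ⟨J, hJ, hxJ⟩

theorem fg_le_tOp {X J₀ : Submodule A K} (hX : X ≠ ⊥) (hfg : J₀.FG) (h : J₀ ≤ tOp A K X) :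
    ∃ J, (J ≠ ⊥ ∧ J.FG ∧ J ≤ X) ∧ J₀ ≤ vOp A K J := by
  obtain ⟨x₀, hx₀X, hx₀⟩ := Submodule.exists_mem_ne_zero_of_ne_bot hX
  have hbase : (Submodule.span A {x₀}) ≠ ⊥ ∧ (Submodule.span A {x₀}).FG ∧
      Submodule.span A {x₀} ≤ X :=
    ⟨by simpa [Submodule.span_singleton_eq_bot] using hx₀,
     Submodule.fg_span_singleton _, by rw [Submodule.span_le]; simpa using hx₀X⟩
  refine Submodule.fg_induction (motive := fun N _ => N ≤ tOp A K X → ∃ J, (J ≠ ⊥ ∧ J.FG ∧ J ≤ X) ∧ N ≤ vOp A K J)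
    (fun x hx => ?_) (fun M₁ M₂ _ _ ih₁ ih₂ hsup => ?_) J₀ hfg h
  · by_cases hx0 : x = 0
    · subst hx0
      refine ⟨Submodule.span A {x₀}, hbase, ?_⟩
      simp
    · obtain ⟨J, hJ, hxJ⟩ := exists_of_mem_tOp (hx (Submodule.mem_span_singleton_self x)) hx0
      exact ⟨J, hJ, by rw [Submodule.span_le]; simpa using hxJ⟩
  · obtain ⟨J₁, hJ₁, hle₁⟩ := ih₁ (le_sup_left.trans hsup)
    obtain ⟨J₂, hJ₂, hle₂⟩ := ih₂ (le_sup_right.trans hsup)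
    exact ⟨J₁ ⊔ J₂, ⟨fun hb => hJ₁.1 (sup_eq_bot_iff.1 hb).1, hJ₁.2.1.sup hJ₂.2.1,
      sup_le hJ₁.2.2 hJ₂.2.2⟩,
      sup_le (hle₁.trans (vOp_mono le_sup_left)) (hle₂.trans (vOp_mono le_sup_right))⟩

theorem tOp_tOp (X : Submodule A K) : tOp A K (tOp A K X) = tOp A K X := by
  refine le_antisymm (iSup₂_le fun J hJ => ?_) (le_tOp _)
  have hX : X ≠ ⊥ := by
    rintro rfl
    rw [tOp_bot] at hJ
    exact hJ.1 (le_bot_iff.1 hJ.2.2)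
  obtain ⟨J', hJ', hle⟩ := fg_le_tOp hX hJ.2.1 hJ.2.2
  calc vOp A K J ≤ vOp A K (vOp A K J') := vOp_mono hle
    _ = vOp A K J' := vOp_vOp _
    _ ≤ tOp A K X := vOp_le_tOp hJ'.1 hJ'.2.1 hJ'.2.2

theorem tOp_one : tOp A K (1 : Submodule A K) = 1 :=
  le_antisymm (iSup₂_le fun _ hJ => (vOp_mono hJ.2.2).trans_eq vOp_one) (le_tOp _)

theorem tOp_smul {c : K} (hc : c ≠ 0) (X : Submodule A K) :
    tOp A K (c • X) = c • tOp A K X := by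
  have key : ∀ (d : K), d ≠ 0 → ∀ Y : Submodule A K, tOp A K (d • Y) ≤ d • tOp A K Y := by
    intro d hd Y
    refine iSup₂_le fun J hJ => ?_
    have h1 : d⁻¹ • J ≤ Y := by
      have h0 := smul_submodule_mono (c := d⁻¹) hJ.2.2
      rwa [smul_smul, inv_mul_cancel₀ hd, one_smul] at h0
    have h2 : vOp A K J = d • vOp A K (d⁻¹ • J) := by
      rw [← vOp_smul hd, smul_smul, mul_inv_cancel₀ hd, one_smul]
    rw [h2]
    refine smul_submodule_mono (vOp_le_tOp ?_ (smul_fg hJ.2.1) h1)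
    intro hb
    exact hJ.1 (by rwa [smul_eq_bot_iff (inv_ne_zero hd)] at hb)
  refine le_antisymm (key c hc X) ?_
  have := key c⁻¹ (inv_ne_zero hc) (c • X)
  rw [smul_smul, inv_mul_cancel₀ hc, one_smul] at this
  calc c • tOp A K X ≤ c • (c⁻¹ • tOp A K (c • X)) := smul_submodule_mono this
    _ = tOp A K (c • X) := by rw [smul_smul, mul_inv_cancel₀ hc, one_smul]

end Generic2

section Generic3

variable {A : Type*} [CommRing A] {K : Type*} [Field K] [Algebra A K]

theorem exists_fg_of_mem_mul {X Y : Submodule A K} {x : K} (hx : x ∈ X * Y) :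
    ∃ X₀ Y₀ : Submodule A K, X₀.FG ∧ Y₀.FG ∧ X₀ ≤ X ∧ Y₀ ≤ Y ∧ x ∈ X₀ * Y₀ := by
  refine Submodule.mul_induction_on hx ?_ ?_
  · intro m hm n hn
    exact ⟨Submodule.span A {m}, Submodule.span A {n}, Submodule.fg_span_singleton _,
      Submodule.fg_span_singleton _, by rw [Submodule.span_le]; simpa using hm,
      by rw [Submodule.span_le]; simpa using hn,
      Submodule.mul_mem_mul (Submodule.mem_span_singleton_self m)
        (Submodule.mem_span_singleton_self n)⟩
  · rintro x y ⟨X₁, Y₁, hf1, hf2, hl1, hl2, hm1⟩ ⟨X₂, Y₂, hf1', hf2', hl1', hl2', hm2⟩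
    exact ⟨X₁ ⊔ X₂, Y₁ ⊔ Y₂, hf1.sup hf1', hf2.sup hf2', sup_le hl1 hl1', sup_le hl2 hl2',
      add_mem ((mul_le_mul' le_sup_left le_sup_left : X₁ * Y₁ ≤ (X₁ ⊔ X₂) * (Y₁ ⊔ Y₂)) hm1)
        ((mul_le_mul' le_sup_right le_sup_right : X₂ * Y₂ ≤ (X₁ ⊔ X₂) * (Y₁ ⊔ Y₂)) hm2)⟩

theorem one_div_mul_vOp (X Y : Submodule A K) :
    (1 : Submodule A K) / (X * vOp A K Y) = 1 / (X * Y) := by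
  refine le_antisymm (div_le_div_gen (mul_le_mul' le_rfl (le_vOp Y))) ?_
  intro z hz
  refine Submodule.mem_div_iff_forall_mul_mem.2 fun w hw => ?_
  refine Submodule.mul_induction_on hw ?_ ?_
  · intro m hm n hn
    have hzm : z * m ∈ (1 : Submodule A K) / Y := Submodule.mem_div_iff_forall_mul_mem.2
      fun y hy => by
        rw [mul_assoc]
        exact Submodule.mem_div_iff_forall_mul_mem.1 hz _ (Submodule.mul_mem_mul hm hy)
    have := Submodule.mem_div_iff_forall_mul_mem.1 hn _ hzm
    rwa [show z * (m * n) = n * (z * m) by ring]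
  · intro a b ha hb
    rw [mul_add]
    exact add_mem ha hb

theorem vOp_mul_vOp (X Y : Submodule A K) :
    vOp A K (X * vOp A K Y) = vOp A K (X * Y) := by
  show (1 : Submodule A K) / (1 / (X * vOp A K Y)) = 1 / (1 / (X * Y))
  rw [one_div_mul_vOp]

theorem mul_ne_bot {X Y : Submodule A K} (hX : X ≠ ⊥) (hY : Y ≠ ⊥) : X * Y ≠ ⊥ := by
  obtain ⟨x, hx, hx0⟩ := Submodule.exists_mem_ne_zero_of_ne_bot hX
  obtain ⟨y, hy, hy0⟩ := Submodule.exists_mem_ne_zero_of_ne_bot hY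
  intro h
  have := Submodule.mul_mem_mul hx hy
  rw [h, Submodule.mem_bot] at this
  exact mul_ne_zero hx0 hy0 this

theorem tOp_mul_tOp (X Y : Submodule A K) :
    tOp A K (X * tOp A K Y) = tOp A K (X * Y) := by
  refine le_antisymm ?_ (tOp_mono (mul_le_mul' le_rfl (le_tOp Y)))
  by_cases hX : X = ⊥
  · subst hX
    simp only [Submodule.bot_mul]
    exact le_rfl
  by_cases hY : Y = ⊥
  · subst hY
    rw [tOp_bot, Submodule.mul_bot]
  obtain ⟨x₀, hx₀X, hx₀⟩ := Submodule.exists_mem_ne_zero_of_ne_bot hX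
  obtain ⟨y₀, hy₀Y, hy₀⟩ := Submodule.exists_mem_ne_zero_of_ne_bot hY
  refine iSup₂_le fun J₀ hJ₀ => ?_
  -- decompose J₀ inside X * tOp Y
  have key : ∃ X₀ Y' : Submodule A K, X₀.FG ∧ (Y' ≠ ⊥ ∧ Y'.FG ∧ Y' ≤ Y) ∧ X₀ ≤ X ∧
      J₀ ≤ X₀ * vOp A K Y' := by
    refine Submodule.fg_induction (motive := fun N _ => N ≤ X * tOp A K Y → ∃ X₀ Y' : Submodule A K, X₀.FG ∧
        (Y' ≠ ⊥ ∧ Y'.FG ∧ Y' ≤ Y) ∧ X₀ ≤ X ∧ N ≤ X₀ * vOp A K Y')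
      (fun x hx => ?_) (fun M₁ M₂ _ _ ih₁ ih₂ hsup => ?_) J₀ hJ₀.2.1 hJ₀.2.2
    · obtain ⟨X₀, Y₀, hfX₀, hfY₀, hlX₀, hlY₀, hmem⟩ :=
        exists_fg_of_mem_mul (hx (Submodule.mem_span_singleton_self x))
      obtain ⟨J, hJ, hY₀J⟩ := fg_le_tOp hY hfY₀ hlY₀
      refine ⟨X₀, J, hfX₀, hJ, hlX₀, ?_⟩
      rw [Submodule.span_le]
      have : x ∈ X₀ * vOp A K J := mul_le_mul' le_rfl hY₀J hmem
      simpa using this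
    · obtain ⟨X₁, Y₁, hf1, hY1, hl1, hm1⟩ := ih₁ (le_sup_left.trans hsup)
      obtain ⟨X₂, Y₂, hf2, hY2, hl2, hm2⟩ := ih₂ (le_sup_right.trans hsup)
      refine ⟨X₁ ⊔ X₂, Y₁ ⊔ Y₂, hf1.sup hf2,
        ⟨fun hb => hY1.1 (sup_eq_bot_iff.1 hb).1, hY1.2.1.sup hY2.2.1,
          sup_le hY1.2.2 hY2.2.2⟩, sup_le hl1 hl2, ?_⟩
      exact sup_le
        (hm1.trans (mul_le_mul' le_sup_left (vOp_mono le_sup_left)))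
        (hm2.trans (mul_le_mul' le_sup_right (vOp_mono le_sup_right)))
  obtain ⟨X₀, Y', hfX₀, hY', hlX₀, hle⟩ := key
  -- pad X₀ to be nonzero
  set X₁ := X₀ ⊔ Submodule.span A {x₀} with hX₁
  have hfX₁ : X₁.FG := hfX₀.sup (Submodule.fg_span_singleton _)
  have hlX₁ : X₁ ≤ X := sup_le hlX₀ (by rw [Submodule.span_le]; simpa using hx₀X)
  have hX₁b : X₁ ≠ ⊥ := fun hb => by
    have : Submodule.span A {x₀} = ⊥ := (sup_eq_bot_iff.1 hb).2
    exact hx₀ (Submodule.span_singleton_eq_bot.1 this)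
  have hle' : J₀ ≤ X₁ * vOp A K Y' := hle.trans (mul_le_mul' le_sup_left le_rfl)
  calc vOp A K J₀ ≤ vOp A K (X₁ * vOp A K Y') := vOp_mono hle'
    _ = vOp A K (X₁ * Y') := vOp_mul_vOp _ _
    _ ≤ tOp A K (X * Y) := vOp_le_tOp (mul_ne_bot hX₁b hY'.1)
        (hfX₁.mul hY'.2.1) (mul_le_mul' hlX₁ hY'.2.2)

end Generic3

section Bridge

variable {R : Type*} [CommRing R] {K : Type*} [Field K] [Algebra R K]
variable {A : Type*} [CommRing A] [Algebra R A] [Algebra A K] [IsScalarTower R A K]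

variable (A) in
/-- Extension of scalars of a submodule of `K` along `R → A`. -/
noncomputable def extS (M : Submodule R K) : Submodule A K := Submodule.span A (M : Set K)

variable (R) in
/-- Restriction of scalars. -/
def resS (X : Submodule A K) : Submodule R K := X.restrictScalars R

theorem mem_resS {X : Submodule A K} {x : K} : x ∈ resS R X ↔ x ∈ X := Iff.rfl

theorem le_resS_extS (M : Submodule R K) : M ≤ resS R (extS A M) := Submodule.subset_span

theorem extS_resS (X : Submodule A K) : extS A (resS R X) = X := Submodule.span_eq X

theorem extS_mono {M N : Submodule R K} (h : M ≤ N) : extS A M ≤ extS A N :=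
  Submodule.span_mono h

theorem extS_le_iff {M : Submodule R K} {X : Submodule A K} :
    extS A M ≤ X ↔ M ≤ resS R X := Submodule.span_le

theorem extS_bot_iff {M : Submodule R K} : extS A M = ⊥ ↔ M = ⊥ := by
  constructor
  · intro h
    rw [eq_bot_iff]
    intro x hx
    have := Submodule.subset_span (R := A) hx
    rw [show Submodule.span A (M : Set K) = extS A M from rfl, h] at this
    simpa using this
  · rintro rfl
    refine le_antisymm ?_ bot_le
    rw [extS, Submodule.span_le]
    simp

theorem extS_fg {M : Submodule R K} (h : M.FG) : (extS A M).FG := by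
  obtain ⟨s, rfl⟩ := h
  rw [extS, Submodule.span_span_of_tower]
  exact ⟨s, rfl⟩

theorem extS_mul (M N : Submodule R K) : extS A (M * N) = extS A M * extS A N := by
  have h1 : M * N = Submodule.span R ((M : Set K) * (N : Set K)) := by
    rw [← Submodule.span_mul_span, Submodule.span_eq, Submodule.span_eq]
  rw [extS, h1, Submodule.span_span_of_tower, ← Submodule.span_mul_span]
  rfl

theorem extS_smul (c : K) (M : Submodule R K) : extS A (c • M) = c • extS A M := by
  rw [extS, Submodule.coe_pointwise_smul, Submodule.span_smul]
  rfl

theorem extS_one_le : extS A (1 : Submodule R K) ≤ (1 : Submodule A K) := by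
  rw [extS_le_iff]
  intro x hx
  obtain ⟨y, rfl⟩ := Submodule.mem_one.1 hx
  rw [mem_resS]
  exact Submodule.mem_one.2 ⟨algebraMap R A y, (IsScalarTower.algebraMap_apply R A K y).symm⟩

/-- Transfer of the `t`-operation under the hypothesis that `v`-closures extend. -/
theorem tOp_le_res_tOp_extS
    (Hv : ∀ M : Submodule R K, M.FG → M ≠ ⊥ → vOp R K M ≤ resS R (vOp A K (extS A M)))
    (M : Submodule R K) : tOp R K M ≤ resS R (tOp A K (extS A M)) := by
  refine iSup₂_le fun J hJ => ?_
  refine (Hv J hJ.2.1 hJ.1).trans ?_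
  intro x hx
  rw [mem_resS] at hx ⊢
  exact vOp_le_tOp (fun h => hJ.1 (extS_bot_iff.1 h)) (extS_fg hJ.2.1)
    (extS_mono hJ.2.2) hx

theorem tOp_extS_tOp
    (Hv : ∀ M : Submodule R K, M.FG → M ≠ ⊥ → vOp R K M ≤ resS R (vOp A K (extS A M)))
    (M : Submodule R K) : tOp A K (extS A (tOp R K M)) = tOp A K (extS A M) := by
  refine le_antisymm ?_ (tOp_mono (extS_mono (le_tOp M)))
  have h1 : extS A (tOp R K M) ≤ tOp A K (extS A M) :=
    extS_le_iff.2 (tOp_le_res_tOp_extS Hv M)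
  calc tOp A K (extS A (tOp R K M)) ≤ tOp A K (tOp A K (extS A M)) := tOp_mono h1
    _ = tOp A K (extS A M) := tOp_tOp _

end Bridge

section Master

variable {R : Type*} [CommRing R] [IsDomain R]
variable {A : Type*} [CommRing A] [Algebra R A] [Algebra A (FractionRing R)]
  [IsScalarTower R A (FractionRing R)]

local notation "K" => FractionRing R

theorem mem_nzd_of_image_ne_zero (Hinj : Function.Injective (algebraMap A K)) {a : A}
    (h : algebraMap A K a ≠ 0) : a ∈ nonZeroDivisors A := mem_nonZeroDivisors_iff_right.2 fun x hx => by
  have : algebraMap A K x * algebraMap A K a = 0 := by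
    rw [← map_mul]
    rw [hx]
    exact map_zero _
  rcases mul_eq_zero.1 this with h' | h'
  · exact Hinj (by rw [h', map_zero])
  · exact absurd h' h

theorem algebraMap_R_K_ne_zero {a : R} (ha : a ∈ nonZeroDivisors R) :
    algebraMap R K a ≠ 0 := by
  intro h
  have : a = 0 := IsFractionRing.injective R K (by rw [h, map_zero])
  exact mem_nonZeroDivisors_iff_ne_zero.1 ha this

theorem fractional_tOp_extS (Hinj : Function.Injective (algebraMap A K))
    {J : Submodule R K} (hJfrac : IsFractional (nonZeroDivisors R) J) :
    IsFractional (nonZeroDivisors A) (tOp A K (extS A J)) := by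
  obtain ⟨a, haR, haJ⟩ := hJfrac
  have haK : algebraMap R K a ≠ 0 := algebraMap_R_K_ne_zero haR
  have haA : algebraMap R A a ∈ nonZeroDivisors A := by
    refine mem_nzd_of_image_ne_zero Hinj ?_
    rwa [← IsScalarTower.algebraMap_apply R A K]
  refine ⟨algebraMap R A a, haA, fun b hb => ?_⟩
  have hsub : (algebraMap R K a) • J ≤ (1 : Submodule R K) := by
    rintro x ⟨y, hy, rfl⟩
    obtain ⟨z, hz⟩ := haJ y hy
    refine Submodule.mem_one.2 ⟨z, ?_⟩
    simp only [DistribSMul.toLinearMap_apply, smul_eq_mul]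
    rw [hz, Algebra.smul_def]
  have hle : (algebraMap R K a) • tOp A K (extS A J) ≤ (1 : Submodule A K) := by
    rw [← tOp_smul haK, ← extS_smul]
    calc tOp A K (extS A ((algebraMap R K a) • J)) ≤ tOp A K (extS A 1) :=
          tOp_mono (extS_mono hsub)
      _ ≤ tOp A K 1 := tOp_mono extS_one_le
      _ = 1 := tOp_one
  have hmem : (algebraMap R A a) • b ∈ (algebraMap R K a) • tOp A K (extS A J) := by
    have : (algebraMap R A a) • b = (algebraMap R K a) • b := by
      rw [algebraMap_smul, Algebra.smul_def, smul_eq_mul]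
    rw [this]
    exact Submodule.smul_mem_pointwise_smul b _ _ hb
  obtain ⟨z, hz⟩ := Submodule.mem_one.1 (hle hmem)
  exact ⟨z, hz⟩

theorem smul_mul_submodule (z : K) (M N : Submodule A K) : (z • M) * N = z • (M * N) := by
  refine le_antisymm ?_ ?_
  · rw [Submodule.mul_le]
    rintro m ⟨m₀, hm₀, rfl⟩ n hn
    simp only [DistribSMul.toLinearMap_apply]
    have : (z • m₀) * n = z • (m₀ * n) := by
      rw [smul_eq_mul, smul_eq_mul, mul_assoc]
    rw [this]
    exact Submodule.smul_mem_pointwise_smul _ _ _ (Submodule.mul_mem_mul hm₀ hn)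
  · rintro x ⟨w, hw, rfl⟩
    simp only [DistribSMul.toLinearMap_apply]
    refine Submodule.mul_induction_on hw (fun m hm n hn => ?_) (fun a b ha hb => ?_)
    · have : z • (m * n) = (z • m) * n := by
        rw [smul_eq_mul, smul_eq_mul, mul_assoc]
      rw [this]
      exact Submodule.mul_mem_mul (Submodule.smul_mem_pointwise_smul _ _ _ hm) hn
    · rw [smul_add]
      exact add_mem ha hb

theorem mul_smul_submodule (z : K) (M N : Submodule A K) : M * (z • N) = z • (M * N) := by
  rw [mul_comm, smul_mul_submodule, mul_comm]

/-- Master lemma, Clifford case. -/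
theorem master_clifford
    (Hinj : Function.Injective (algebraMap A K))
    (Hv : ∀ M : Submodule R K, M.FG → M ≠ ⊥ →
      vOp R K M ≤ resS R (vOp A K (extS A M)))
    (HX : ∀ X : Submodule A K, X ≠ ⊥ → IsFractional (nonZeroDivisors A) X →
      tOp A K X = X →
      ∃ (I : Submodule R K) (d : K), d ≠ 0 ∧ extS A I = d • X ∧
        I ≠ ⊥ ∧ IsFractional (nonZeroDivisors R) I ∧ tOp R K I = I)
    (h : IsCliffordTRegular R)
    (X : Submodule A K) (hb : X ≠ ⊥) (hfrac : IsFractional (nonZeroDivisors A) X)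
    (ht : tOp A K X = X) :
    ∃ Y : Submodule A K,
      (Y ≠ ⊥ ∧ IsFractional (nonZeroDivisors A) Y ∧ tOp A K Y = Y) ∧
      ∃ c : K, c ≠ 0 ∧ tOp A K (X * X * Y) = c • X := by
  obtain ⟨I, d, hd0, heI, hIb, hIfrac, hIt⟩ := HX X hb hfrac ht
  obtain ⟨J, hJ, c, hc0, heq⟩ := h I ⟨⟨hIb, hIfrac⟩, hIt⟩
  obtain ⟨⟨hJb, hJfrac⟩, hJt⟩ := hJ
  set Y := tOp A K (extS A J) with hY
  have hYb : Y ≠ ⊥ := fun hbot => hJb (extS_bot_iff.1 (le_bot_iff.1 ((le_tOp _).trans_eq hbot)))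
  have hYfrac : IsFractional (nonZeroDivisors A) Y := fractional_tOp_extS Hinj hJfrac
  have hYt : tOp A K Y = Y := tOp_tOp _
  have hXd : X = d⁻¹ • extS A I := by
    rw [heI, smul_smul, inv_mul_cancel₀ hd0, one_smul]
  have htEI : tOp A K (extS A I) = d • X := by
    rw [heI, tOp_smul hd0, ht]
  refine ⟨Y, ⟨hYb, hYfrac, hYt⟩, d⁻¹ * d⁻¹ * (c * d), by
      simp [hd0, hc0, sub_eq_zero, mul_eq_zero], ?_⟩
  have step1 : tOp A K (X * X * Y) = tOp A K (X * X * extS A J) := tOp_mul_tOp _ _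
  have step2 : X * X * extS A J = (d⁻¹ * d⁻¹) • extS A (I * I * J) := by
    rw [extS_mul, extS_mul, hXd, smul_mul_submodule, mul_smul_submodule, smul_smul,
      smul_mul_submodule]
  have step3 : tOp A K (extS A (I * I * J)) = (c * d) • X := by
    rw [← tOp_extS_tOp Hv (I * I * J), heq, extS_smul, tOp_smul hc0, htEI, smul_smul]
  rw [step1, step2, tOp_smul (by simp [hd0] : d⁻¹ * d⁻¹ ≠ (0:K)), step3, smul_smul]

/-- Master lemma, Boole case. -/
theorem master_boole
    (Hv : ∀ M : Submodule R K, M.FG → M ≠ ⊥ →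
      vOp R K M ≤ resS R (vOp A K (extS A M)))
    (HX : ∀ X : Submodule A K, X ≠ ⊥ → IsFractional (nonZeroDivisors A) X →
      tOp A K X = X →
      ∃ (I : Submodule R K) (d : K), d ≠ 0 ∧ extS A I = d • X ∧
        I ≠ ⊥ ∧ IsFractional (nonZeroDivisors R) I ∧ tOp R K I = I)
    (h : IsBooleTRegular R)
    (X : Submodule A K) (hb : X ≠ ⊥) (hfrac : IsFractional (nonZeroDivisors A) X)
    (ht : tOp A K X = X) :
    ∃ c : K, c ≠ 0 ∧ tOp A K (X * X) = c • X := by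
  obtain ⟨I, d, hd0, heI, hIb, hIfrac, hIt⟩ := HX X hb hfrac ht
  obtain ⟨c, hc0, heq⟩ := h I ⟨⟨hIb, hIfrac⟩, hIt⟩
  have hXd : X = d⁻¹ • extS A I := by
    rw [heI, smul_smul, inv_mul_cancel₀ hd0, one_smul]
  have htEI : tOp A K (extS A I) = d • X := by
    rw [heI, tOp_smul hd0, ht]
  refine ⟨d⁻¹ * d⁻¹ * (c * d), by simp [hd0, hc0, mul_eq_zero], ?_⟩
  have step2 : X * X = (d⁻¹ * d⁻¹) • extS A (I * I) := by
    rw [extS_mul, hXd, smul_mul_submodule, mul_smul_submodule, smul_smul]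
  have step3 : tOp A K (extS A (I * I)) = (c * d) • X := by
    rw [← tOp_extS_tOp Hv (I * I), heq, extS_smul, tOp_smul hc0, htEI, smul_smul]
  rw [step2, tOp_smul (by simp [hd0] : d⁻¹ * d⁻¹ ≠ (0:K)), step3, smul_smul]

end Master

section Transfer

variable {A : Type*} [CommRing A] {L : Type*} {K' : Type*} [Field L] [Field K']
  [Algebra A L] [Algebra A K'] (e : L ≃ₐ[A] K')

theorem mem_mapE {X : Submodule A L} {x : K'} :
    x ∈ X.map e.toLinearMap ↔ e.symm x ∈ X := by
  rw [Submodule.mem_map]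
  constructor
  · rintro ⟨y, hy, rfl⟩
    simpa using hy
  · intro hx
    exact ⟨e.symm x, hx, by simp⟩

theorem mapE_roundtrip (X : Submodule A L) :
    (X.map e.toLinearMap).map e.symm.toLinearMap = X := by
  ext x
  rw [mem_mapE, mem_mapE]
  simp

theorem mapE_bot_iff {X : Submodule A L} : X.map e.toLinearMap = ⊥ ↔ X = ⊥ := by
  constructor
  · intro h
    rw [eq_bot_iff]
    intro x hx
    have : e x ∈ X.map e.toLinearMap := Submodule.mem_map_of_mem hx
    rw [h, Submodule.mem_bot] at this
    have : x = 0 := by simpa using congrArg e.symm this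
    simpa [this] using zero_mem (⊥ : Submodule A L)
  · rintro rfl
    exact Submodule.map_bot _

theorem mapE_mono {X Y : Submodule A L} (h : X ≤ Y) :
    X.map e.toLinearMap ≤ Y.map e.toLinearMap := Submodule.map_mono h

theorem mapE_le_iff {X Y : Submodule A L} :
    X.map e.toLinearMap ≤ Y.map e.toLinearMap ↔ X ≤ Y := by
  constructor
  · intro h x hx
    have := h (Submodule.mem_map_of_mem (f := e.toLinearMap) hx)
    rw [mem_mapE] at this
    simpa using this
  · exact mapE_mono e

theorem mapE_one : (1 : Submodule A L).map e.toLinearMap = 1 := by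
  have := Submodule.map_one e.toAlgHom
  simpa using this

theorem mapE_mul (X Y : Submodule A L) :
    (X * Y).map e.toLinearMap = X.map e.toLinearMap * Y.map e.toLinearMap := by
  have := Submodule.map_mul X Y e.toAlgHom
  simpa using this

theorem mapE_div (X Y : Submodule A L) :
    (X / Y).map e.toLinearMap = X.map e.toLinearMap / Y.map e.toLinearMap :=
  Submodule.map_div X Y e

theorem mapE_vOp (X : Submodule A L) :
    (vOp A L X).map e.toLinearMap = vOp A K' (X.map e.toLinearMap) := by
  show ((1 / (1 / X)).map e.toLinearMap) = 1 / (1 / X.map e.toLinearMap)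
  rw [mapE_div, mapE_div, mapE_one]

theorem mapE_fg {X : Submodule A L} (h : X.FG) : (X.map e.toLinearMap).FG :=
  Submodule.FG.map _ h

theorem mapE_smul (c : L) (X : Submodule A L) :
    (c • X).map e.toLinearMap = (e c) • X.map e.toLinearMap := by
  refine le_antisymm ?_ ?_
  · rintro x ⟨y, ⟨z, hz, rfl⟩, rfl⟩
    simp only [DistribSMul.toLinearMap_apply, AlgEquiv.toLinearMap_apply]
    rw [smul_eq_mul, map_mul]
    exact Submodule.smul_mem_pointwise_smul _ _ _ (Submodule.mem_map_of_mem hz)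
  · rintro x ⟨y, ⟨z, hz, rfl⟩, rfl⟩
    simp only [DistribSMul.toLinearMap_apply, AlgEquiv.toLinearMap_apply,
      smul_eq_mul, ← map_mul]
    exact Submodule.mem_map_of_mem (Submodule.smul_mem_pointwise_smul _ _ _ hz)

theorem mapE_tOp (X : Submodule A L) :
    (tOp A L X).map e.toLinearMap = tOp A K' (X.map e.toLinearMap) := by
  refine le_antisymm ?_ ?_
  · rw [tOp, Submodule.map_iSup]
    refine iSup_le fun J => ?_
    rw [Submodule.map_iSup]
    refine iSup_le fun hJ => ?_
    rw [mapE_vOp]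
    exact vOp_le_tOp (fun h => hJ.1 ((mapE_bot_iff e).1 h)) (mapE_fg e hJ.2.1)
      (mapE_mono e hJ.2.2)
  · refine iSup₂_le fun J' hJ' => ?_
    have hJ'E : J' = (J'.map e.symm.toLinearMap).map e.toLinearMap := by
      ext x
      rw [mem_mapE, mem_mapE]
      simp
    have h1 : J'.map e.symm.toLinearMap ≤ X := by
      have := mapE_mono e.symm hJ'.2.2
      rwa [mapE_roundtrip] at this
    have h2 : J'.map e.symm.toLinearMap ≠ ⊥ := fun h => by
      rw [hJ'E, h, Submodule.map_bot] at hJ'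
      exact hJ'.1 rfl
    calc vOp A K' J' = (vOp A L (J'.map e.symm.toLinearMap)).map e.toLinearMap := by
          rw [mapE_vOp, ← hJ'E]
      _ ≤ (tOp A L X).map e.toLinearMap :=
          mapE_mono e (vOp_le_tOp h2 (mapE_fg e.symm hJ'.2.1) h1)

theorem mapE_fractional {X : Submodule A L} (h : IsFractional (nonZeroDivisors A) X) :
    IsFractional (nonZeroDivisors A) (X.map e.toLinearMap) := by
  obtain ⟨a, ha, hint⟩ := h
  refine ⟨a, ha, ?_⟩
  rintro b ⟨y, hy, rfl⟩
  obtain ⟨z, hz⟩ := hint y hy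
  refine ⟨z, ?_⟩
  simp only [AlgEquiv.toLinearMap_apply]
  have h2 := congrArg e hz
  rw [AlgEquiv.commutes, map_smul] at h2
  exact h2

end Transfer

section Wrap

variable {A : Type*} [CommRing A] [IsDomain A] {K' : Type*} [Field K'] [Algebra A K']

theorem isCliffordTRegular_of_equiv (e : FractionRing A ≃ₐ[A] K')
    (hK : ∀ X : Submodule A K', X ≠ ⊥ → IsFractional (nonZeroDivisors A) X →
      tOp A K' X = X →
      ∃ Y : Submodule A K',
        (Y ≠ ⊥ ∧ IsFractional (nonZeroDivisors A) Y ∧ tOp A K' Y = Y) ∧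
        ∃ c : K', c ≠ 0 ∧ tOp A K' (X * X * Y) = c • X) :
    IsCliffordTRegular A := by
  intro X' hX'
  obtain ⟨⟨hb, hfrac⟩, ht⟩ := hX'
  set X := X'.map e.toLinearMap with hXdef
  have hXb : X ≠ ⊥ := fun h => hb ((mapE_bot_iff e).1 h)
  have hXfrac := mapE_fractional e hfrac
  have hXt : tOp A K' X = X := by rw [← mapE_tOp, ht]
  obtain ⟨Y, ⟨hYb, hYfrac, hYt⟩, c, hc0, heq⟩ := hK X hXb hXfrac hXt
  have h1 : (X * X * Y).map e.symm.toLinearMap =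
      X' * X' * Y.map e.symm.toLinearMap := by
    rw [mapE_mul e.symm, mapE_mul e.symm, hXdef, mapE_roundtrip e]
  refine ⟨Y.map e.symm.toLinearMap,
    ⟨⟨fun h => hYb ((mapE_bot_iff e.symm).1 h), mapE_fractional e.symm hYfrac⟩,
      by rw [← mapE_tOp e.symm, hYt]⟩,
    e.symm c, fun h => hc0 (by simpa using congrArg e h), ?_⟩
  calc tOp A (FractionRing A) (X' * X' * Y.map e.symm.toLinearMap)
      = tOp A (FractionRing A) ((X * X * Y).map e.symm.toLinearMap) := by rw [h1]
    _ = (tOp A K' (X * X * Y)).map e.symm.toLinearMap := (mapE_tOp e.symm _).symm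
    _ = ((c • X).map e.symm.toLinearMap) := by rw [heq]
    _ = e.symm c • X' := by rw [mapE_smul e.symm, hXdef, mapE_roundtrip e]

theorem isBooleTRegular_of_equiv (e : FractionRing A ≃ₐ[A] K')
    (hK : ∀ X : Submodule A K', X ≠ ⊥ → IsFractional (nonZeroDivisors A) X →
      tOp A K' X = X →
      ∃ c : K', c ≠ 0 ∧ tOp A K' (X * X) = c • X) :
    IsBooleTRegular A := by
  intro X' hX'
  obtain ⟨⟨hb, hfrac⟩, ht⟩ := hX'
  set X := X'.map e.toLinearMap with hXdef
  have hXb : X ≠ ⊥ := fun h => hb ((mapE_bot_iff e).1 h)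
  have hXfrac := mapE_fractional e hfrac
  have hXt : tOp A K' X = X := by rw [← mapE_tOp, ht]
  obtain ⟨c, hc0, heq⟩ := hK X hXb hXfrac hXt
  have h1 : (X * X).map e.symm.toLinearMap = X' * X' := by
    rw [mapE_mul e.symm, hXdef, mapE_roundtrip e]
  refine ⟨e.symm c, fun h => hc0 (by simpa using congrArg e h), ?_⟩
  calc tOp A (FractionRing A) (X' * X')
      = tOp A (FractionRing A) ((X * X).map e.symm.toLinearMap) := by rw [h1]
    _ = (tOp A K' (X * X)).map e.symm.toLinearMap := (mapE_tOp e.symm _).symm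
    _ = ((c • X).map e.symm.toLinearMap) := by rw [heq]
    _ = e.symm c • X' := by rw [mapE_smul e.symm, hXdef, mapE_roundtrip e]

end Wrap

section FracInstance

variable {R : Type*} [CommRing R] [IsDomain R]
variable {A : Type*} [CommRing A] [Algebra R A] [Algebra A (FractionRing R)]
  [IsScalarTower R A (FractionRing R)]

theorem isFractionRing_of_tower (Hinj : Function.Injective (algebraMap A (FractionRing R))) :
    IsFractionRing A (FractionRing R) := by
  haveI : Nontrivial A := ⟨1, 0, fun h => one_ne_zero (α := FractionRing R)
    (by rw [← (algebraMap A (FractionRing R)).map_one, h, map_zero])⟩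
  constructor; constructor
  · rintro ⟨y, hy⟩
    have hy0 : y ≠ 0 := nonZeroDivisors.ne_zero hy
    have : algebraMap A (FractionRing R) y ≠ 0 := fun h =>
      hy0 (Hinj (by rw [h, map_zero]))
    exact isUnit_iff_ne_zero.2 this
  · intro z
    obtain ⟨⟨r, s⟩, h⟩ := IsLocalization.surj (nonZeroDivisors R) z
    refine ⟨⟨algebraMap R A r, ⟨algebraMap R A s,
      mem_nzd_of_image_ne_zero Hinj ?_⟩⟩, ?_⟩
    · rw [← IsScalarTower.algebraMap_apply R A (FractionRing R)]
      exact algebraMap_R_K_ne_zero s.2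
    · simpa only [← IsScalarTower.algebraMap_apply R A (FractionRing R)] using h
  · intro x y h
    exact ⟨1, by rw [Hinj h]⟩

end FracInstance

section StabCase

variable {R : Type*} [CommRing R] [IsDomain R]

theorem div_div_one (B C : Submodule R (FractionRing R)) :
    ((1 : Submodule R (FractionRing R)) / B) / C = 1 / (C * B) := by
  ext z
  simp only [Submodule.mem_div_iff_forall_mul_mem]
  constructor
  · intro h w hw
    refine Submodule.mul_induction_on hw (fun c hc b hb => ?_) (fun a b ha hb => ?_)
    · rw [show z * (c * b) = z * c * b by ring]
      exact h c hc b hb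
    · rw [mul_add]
      exact add_mem ha hb
  · intro h c hc b hb
    have := h _ (Submodule.mul_mem_mul hc hb)
    rwa [← mul_assoc] at this

/-- The "denominator" submodule for the stable ring of `C_v`. -/
noncomputable def Wd (C : Submodule R (FractionRing R)) : Submodule R (FractionRing R) :=
  vOp R (FractionRing R) C * ((1 : Submodule R (FractionRing R)) / C)

theorem stab_div_eq (C : Submodule R (FractionRing R)) :
    vOp R (FractionRing R) C / vOp R (FractionRing R) C =
      (1 : Submodule R (FractionRing R)) / Wd C := by
  show ((1 : Submodule R (FractionRing R)) / (1 / C)) / vOp R (FractionRing R) C = 1 / Wd C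
  rw [div_div_one]
  rfl

theorem mem_one_stab (C : Submodule R (FractionRing R)) {x : FractionRing R} :
    x ∈ (1 : Submodule ↥(stabRing R (vOp R (FractionRing R) C)) (FractionRing R)) ↔
      x ∈ (1 : Submodule R (FractionRing R)) / Wd C := by
  rw [← stab_div_eq]
  constructor
  · intro hx
    obtain ⟨y, hy⟩ := Submodule.mem_one.1 hx
    have hval : algebraMap ↥(stabRing R (vOp R (FractionRing R) C)) (FractionRing R) y
        = (y : FractionRing R) := by
      rw [Subalgebra.algebraMap_eq]
      simp
    rw [hval] at hy
    rw [← hy]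
    exact y.2
  · intro hx
    refine Submodule.mem_one.2 ⟨⟨x, hx⟩, ?_⟩
    rw [Subalgebra.algebraMap_eq]
    simp

theorem stab_algebraMap_injective (C : Submodule R (FractionRing R)) :
    Function.Injective
      (algebraMap ↥(stabRing R (vOp R (FractionRing R) C)) (FractionRing R)) := by
  intro a b h
  rw [Subalgebra.algebraMap_eq] at h
  simp only [Algebra.algebraMap_self, RingHom.id_comp] at h
  exact Subtype.ext (by simpa using h)

theorem Hv_stab (C : Submodule R (FractionRing R)) (M : Submodule R (FractionRing R)) :
    vOp R (FractionRing R) M ≤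
      resS R (vOp ↥(stabRing R (vOp R (FractionRing R) C)) (FractionRing R)
        (extS ↥(stabRing R (vOp R (FractionRing R) C)) M)) := by
  intro x hx
  rw [mem_resS]
  show x ∈ (1 : Submodule ↥(stabRing R (vOp R (FractionRing R) C)) (FractionRing R)) /
    ((1 : Submodule ↥(stabRing R (vOp R (FractionRing R) C)) (FractionRing R)) /
      extS ↥(stabRing R (vOp R (FractionRing R) C)) M)
  rw [Submodule.mem_div_iff_forall_mul_mem]
  intro y hy
  rw [Submodule.mem_div_iff_forall_mul_mem] at hy
  rw [mem_one_stab, Submodule.mem_div_iff_forall_mul_mem]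
  intro w hw
  have hyw : y * w ∈ (1 : Submodule R (FractionRing R)) / M := by
    rw [Submodule.mem_div_iff_forall_mul_mem]
    intro m hm
    have h1 := hy m (le_resS_extS M hm)
    rw [mem_one_stab] at h1
    rw [show y * w * m = y * m * w by ring]
    exact Submodule.mem_div_iff_forall_mul_mem.1 h1 w hw
  have := Submodule.mem_div_iff_forall_mul_mem.1 hx _ hyw
  rwa [show x * (y * w) = x * y * w by ring] at this

theorem Wd_ne_bot {C : Submodule R (FractionRing R)} (hC : C ≠ ⊥)
    (hC1 : C ≤ (1 : Submodule R (FractionRing R))) : Wd C ≠ ⊥ := by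
  refine mul_ne_bot ?_ ?_
  · intro h
    exact hC (le_bot_iff.1 ((le_vOp C).trans_eq h))
  · intro h
    have h1 : (1 : FractionRing R) ∈ (1 : Submodule R (FractionRing R)) / C := by
      rw [Submodule.mem_div_iff_forall_mul_mem]
      intro m hm
      rw [one_mul]
      exact hC1 hm
    rw [h, Submodule.mem_bot] at h1
    exact one_ne_zero h1

theorem HX_stab {C : Submodule R (FractionRing R)} (hC : C ≠ ⊥)
    (hC1 : C ≤ (1 : Submodule R (FractionRing R)))
    (X : Submodule ↥(stabRing R (vOp R (FractionRing R) C)) (FractionRing R)) (hb : X ≠ ⊥)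
    (hfrac : IsFractional (nonZeroDivisors ↥(stabRing R (vOp R (FractionRing R) C))) X)
    (ht : tOp ↥(stabRing R (vOp R (FractionRing R) C)) (FractionRing R) X = X) :
    ∃ (I : Submodule R (FractionRing R)) (d : FractionRing R), d ≠ 0 ∧
      extS ↥(stabRing R (vOp R (FractionRing R) C)) I = d • X ∧
      I ≠ ⊥ ∧ IsFractional (nonZeroDivisors R) I ∧ tOp R (FractionRing R) I = I := by
  refine ⟨resS R X, 1, one_ne_zero, by rw [extS_resS, one_smul], ?_, ?_, ?_⟩
  · intro h
    apply hb
    rw [eq_bot_iff]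
    intro x hx
    have hx' : x ∈ resS R X := hx
    rw [h] at hx'
    simpa using hx'
  · -- fractional over R
    obtain ⟨a, haT, hint⟩ := hfrac
    haveI : Nontrivial ↥(stabRing R (vOp R (FractionRing R) C)) := ⟨1, 0, fun h =>
      one_ne_zero (α := FractionRing R) (by
        have := congrArg
          (algebraMap ↥(stabRing R (vOp R (FractionRing R) C)) (FractionRing R)) h
        rwa [map_one, map_zero] at this)⟩
    have ha0 : a ≠ 0 := nonZeroDivisors.ne_zero haT
    have hdK : algebraMap ↥(stabRing R (vOp R (FractionRing R) C)) (FractionRing R) a ≠ 0 :=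
      fun h => ha0 (stab_algebraMap_injective C (by rw [h, map_zero]))
    have hXint : ∀ b ∈ X,
        algebraMap ↥(stabRing R (vOp R (FractionRing R) C)) (FractionRing R) a * b ∈
          (1 : Submodule R (FractionRing R)) / Wd C := by
      intro b hbX
      obtain ⟨z, hz⟩ := hint b hbX
      rw [← mem_one_stab, ← Algebra.smul_def, ← hz]
      exact Submodule.mem_one.2 ⟨z, rfl⟩
    obtain ⟨b₀, hb₀W, hb₀⟩ := Submodule.exists_mem_ne_zero_of_ne_bot (Wd_ne_bot hC hC1)
    set dK := algebraMap ↥(stabRing R (vOp R (FractionRing R) C)) (FractionRing R) a with hdKdef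
    have hu0 : b₀ * dK ≠ 0 := mul_ne_zero hb₀ hdK
    have huX : ∀ b ∈ X, (b₀ * dK) * b ∈ (1 : Submodule R (FractionRing R)) := by
      intro b hbX
      rw [show b₀ * dK * b = dK * b * b₀ by ring]
      exact Submodule.mem_div_iff_forall_mul_mem.1 (hXint b hbX) b₀ hb₀W
    obtain ⟨⟨r, s⟩, hrs⟩ := IsLocalization.mk'_surjective (nonZeroDivisors R) (b₀ * dK)
    have hr : algebraMap R (FractionRing R) r = (b₀ * dK) * algebraMap R (FractionRing R) s := by
      rw [← hrs]
      exact (IsLocalization.mk'_spec (FractionRing R) r s).symm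
    have hr0 : r ≠ 0 := by
      intro h
      rw [h, map_zero] at hr
      rcases mul_eq_zero.1 hr.symm with h' | h'
      · exact hu0 h'
      · exact algebraMap_R_K_ne_zero s.2 h'
    refine ⟨r, mem_nonZeroDivisors_iff_ne_zero.2 hr0, fun b hbX => ?_⟩
    obtain ⟨z, hz⟩ := Submodule.mem_one.1 (huX b hbX)
    refine ⟨s * z, ?_⟩
    rw [map_mul, hz, Algebra.smul_def, hr]
    ring
  · -- t-closed over R
    refine le_antisymm (iSup₂_le fun J hJ => ?_) (le_tOp _)
    refine (Hv_stab C J).trans ?_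
    intro x hx
    rw [mem_resS] at hx
    rw [mem_resS]
    have hle : vOp ↥(stabRing R (vOp R (FractionRing R) C)) (FractionRing R)
        (extS ↥(stabRing R (vOp R (FractionRing R) C)) J) ≤
        tOp ↥(stabRing R (vOp R (FractionRing R) C)) (FractionRing R) X := by
      refine vOp_le_tOp (fun h => hJ.1 (extS_bot_iff.1 h)) (extS_fg hJ.2.1) ?_
      rw [extS_le_iff]
      exact hJ.2.2
    rw [ht] at hle
    exact hle hx

end StabCase


section LocCase

variable {R : Type*} [CommRing R] [IsDomain R] {S : Submonoid R}
variable [Algebra (Localization S) (FractionRing R)]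
  [IsScalarTower R (Localization S) (FractionRing R)]

theorem s_nzd (hS : (0 : R) ∉ S) {s : R} (hs : s ∈ S) : s ∈ nonZeroDivisors R :=
  mem_nonZeroDivisors_of_ne_zero (fun h => hS (h ▸ hs))

theorem loc_algebraMap_injective (hS : (0 : R) ∉ S) :
    Function.Injective (algebraMap (Localization S) (FractionRing R)) := by
  rw [injective_iff_map_eq_zero]
  intro z hz
  obtain ⟨⟨r, s⟩, rfl⟩ := IsLocalization.mk'_surjective S z
  have hspec := IsLocalization.mk'_spec (Localization S) r s
  have := congrArg (algebraMap (Localization S) (FractionRing R)) hspec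
  rw [map_mul, hz, zero_mul] at this
  simp only [← IsScalarTower.algebraMap_apply R (Localization S) (FractionRing R)] at this
  have hr : r = 0 := IsFractionRing.injective R (FractionRing R) (by rw [← this, map_zero])
  rw [hr]; exact IsLocalization.mk'_zero _

theorem mem_one_loc (hS : (0 : R) ∉ S) {x : FractionRing R} :
    x ∈ (1 : Submodule (Localization S) (FractionRing R)) ↔
      ∃ s ∈ S, algebraMap R (FractionRing R) s * x ∈ (1 : Submodule R (FractionRing R)) := by
  constructor
  · intro hx
    obtain ⟨z, hz⟩ := Submodule.mem_one.1 hx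
    obtain ⟨⟨r, s⟩, rfl⟩ := IsLocalization.mk'_surjective S z
    refine ⟨s, s.2, ?_⟩
    have hspec := IsLocalization.mk'_spec (Localization S) r s
    have h2 := congrArg (algebraMap (Localization S) (FractionRing R)) hspec
    rw [map_mul, hz, ← IsScalarTower.algebraMap_apply R (Localization S) (FractionRing R),
      ← IsScalarTower.algebraMap_apply R (Localization S) (FractionRing R)] at h2
    rw [mul_comm]
    rw [h2]
    exact Submodule.mem_one.2 ⟨r, rfl⟩
  · rintro ⟨s, hs, hmem⟩
    obtain ⟨r, hr⟩ := Submodule.mem_one.1 hmem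
    have hs0 : algebraMap R (FractionRing R) s ≠ 0 := algebraMap_R_K_ne_zero (s_nzd hS hs)
    have hx : x = algebraMap (Localization S) (FractionRing R)
        (IsLocalization.mk' (Localization S) r ⟨s, hs⟩) := by
      have hspec := IsLocalization.mk'_spec (Localization S) r (⟨s, hs⟩ : S)
      have h2 := congrArg (algebraMap (Localization S) (FractionRing R)) hspec
      rw [map_mul, ← IsScalarTower.algebraMap_apply R (Localization S) (FractionRing R),
        ← IsScalarTower.algebraMap_apply R (Localization S) (FractionRing R)] at h2
      refine mul_left_cancel₀ hs0 ?_
      rw [← hr, ← h2]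
      ring
    rw [hx]
    exact Submodule.mem_one.2 ⟨_, rfl⟩

theorem R_smul_mem_loc (N : Submodule (Localization S) (FractionRing R)) (s : R)
    {x : FractionRing R} (hx : x ∈ N) :
    algebraMap R (FractionRing R) s * x ∈ N := by
  have h1 : algebraMap R (FractionRing R) s * x = s • x := (Algebra.smul_def s x).symm
  have h2 : s • x = (algebraMap R (Localization S) s) • x :=
    (algebraMap_smul (Localization S) s x).symm
  rw [h1, h2]
  exact N.smul_mem _ hx

theorem loc_denom (hS : (0 : R) ∉ S) (M : Submodule R (FractionRing R)) (hfg : M.FG) :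
    ∀ y : FractionRing R,
      (∀ m ∈ M, y * m ∈ (1 : Submodule (Localization S) (FractionRing R))) →
      ∃ s ∈ S, ∀ m ∈ M, algebraMap R (FractionRing R) s * (y * m) ∈
        (1 : Submodule R (FractionRing R)) := by
  refine Submodule.fg_induction (motive := fun M _ => ∀ y : FractionRing R,
      (∀ m ∈ M, y * m ∈ (1 : Submodule (Localization S) (FractionRing R))) →
      ∃ s ∈ S, ∀ m ∈ M, algebraMap R (FractionRing R) s * (y * m) ∈
        (1 : Submodule R (FractionRing R)))
    (fun x y hy => ?_) (fun M₁ M₂ _ _ ih₁ ih₂ y hy => ?_) M hfg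
  · obtain ⟨s, hs, hmem⟩ := (mem_one_loc hS).1 (hy x (Submodule.mem_span_singleton_self x))
    refine ⟨s, hs, fun m hm => ?_⟩
    obtain ⟨r, rfl⟩ := Submodule.mem_span_singleton.1 hm
    have : algebraMap R (FractionRing R) s * (y * (r • x)) =
        r • (algebraMap R (FractionRing R) s * (y * x)) := by
      rw [Algebra.smul_def, Algebra.smul_def]
      ring
    rw [this]
    exact Submodule.smul_mem _ r hmem
  · obtain ⟨s₁, hs₁, h₁⟩ := ih₁ y (fun m hm => hy m (le_sup_left (a := M₁) hm))
    obtain ⟨s₂, hs₂, h₂⟩ := ih₂ y (fun m hm => hy m (le_sup_right (b := M₂) hm))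
    refine ⟨s₁ * s₂, S.mul_mem hs₁ hs₂, fun m hm => ?_⟩
    obtain ⟨m₁, hm₁, m₂, hm₂, rfl⟩ := Submodule.mem_sup.1 hm
    have : algebraMap R (FractionRing R) (s₁ * s₂) * (y * (m₁ + m₂)) =
        s₂ • (algebraMap R (FractionRing R) s₁ * (y * m₁)) +
        s₁ • (algebraMap R (FractionRing R) s₂ * (y * m₂)) := by
      rw [Algebra.smul_def, Algebra.smul_def, map_mul]
      ring
    rw [this]
    exact add_mem (Submodule.smul_mem _ _ (h₁ m₁ hm₁)) (Submodule.smul_mem _ _ (h₂ m₂ hm₂))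

theorem Hv_loc (hS : (0 : R) ∉ S) (M : Submodule R (FractionRing R)) (hfg : M.FG)
    (hMb : M ≠ ⊥) :
    vOp R (FractionRing R) M ≤
      resS R (vOp (Localization S) (FractionRing R) (extS (Localization S) M)) := by
  intro x hx
  rw [mem_resS]
  show x ∈ (1 : Submodule (Localization S) (FractionRing R)) /
    ((1 : Submodule (Localization S) (FractionRing R)) / extS (Localization S) M)
  rw [Submodule.mem_div_iff_forall_mul_mem]
  intro y hy
  rw [Submodule.mem_div_iff_forall_mul_mem] at hy
  obtain ⟨s, hs, hmem⟩ := loc_denom hS M hfg y (fun m hm => hy m (le_resS_extS M hm))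
  rw [mem_one_loc hS]
  refine ⟨s, hs, ?_⟩
  have h1 : algebraMap R (FractionRing R) s * y ∈ (1 : Submodule R (FractionRing R)) / M := by
    rw [Submodule.mem_div_iff_forall_mul_mem]
    intro m hm
    have := hmem m hm
    rwa [show algebraMap R (FractionRing R) s * (y * m) =
      algebraMap R (FractionRing R) s * y * m by ring] at this
  have := Submodule.mem_div_iff_forall_mul_mem.1 hx _ h1
  rwa [show x * (algebraMap R (FractionRing R) s * y) =
    algebraMap R (FractionRing R) s * (x * y) by ring] at this

theorem HX_loc (hS : (0 : R) ∉ S)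
    (X : Submodule (Localization S) (FractionRing R)) (hb : X ≠ ⊥)
    (hfrac : IsFractional (nonZeroDivisors (Localization S)) X)
    (ht : tOp (Localization S) (FractionRing R) X = X) :
    ∃ (I : Submodule R (FractionRing R)) (d : FractionRing R), d ≠ 0 ∧
      extS (Localization S) I = d • X ∧
      I ≠ ⊥ ∧ IsFractional (nonZeroDivisors R) I ∧ tOp R (FractionRing R) I = I := by
  obtain ⟨a, haL, hint⟩ := hfrac
  haveI : Nontrivial (Localization S) := ⟨1, 0, fun h =>
    one_ne_zero (α := FractionRing R) (by
      have := congrArg (algebraMap (Localization S) (FractionRing R)) h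
      rwa [map_one, map_zero] at this)⟩
  have ha0 : a ≠ 0 := nonZeroDivisors.ne_zero haL
  set dK := algebraMap (Localization S) (FractionRing R) a with hdKdef
  have hdK0 : dK ≠ 0 := fun h => ha0 (loc_algebraMap_injective hS
    (by rw [map_zero, ← hdKdef]; exact h))
  have hXone : ∀ b ∈ X, dK * b ∈ (1 : Submodule (Localization S) (FractionRing R)) := by
    intro b hbX
    obtain ⟨z, hz⟩ := hint b hbX
    exact Submodule.mem_one.2 ⟨z, by rw [hz, Algebra.smul_def, hdKdef]⟩
  set I := resS R (dK • X) ⊓ (1 : Submodule R (FractionRing R)) with hIdef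
  have hsx : ∀ x ∈ dK • X, ∃ s ∈ S, algebraMap R (FractionRing R) s * x ∈ I := by
    rintro x ⟨x', hx', rfl⟩
    simp only [DistribSMul.toLinearMap_apply, smul_eq_mul]
    obtain ⟨s, hs, h1R⟩ := (mem_one_loc hS).1 (hXone x' hx')
    refine ⟨s, hs, Submodule.mem_inf.2 ⟨?_, h1R⟩⟩
    rw [mem_resS]
    refine R_smul_mem_loc (dK • X) s ?_
    have := Submodule.smul_mem_pointwise_smul x' dK X hx'
    rwa [smul_eq_mul] at this
  refine ⟨I, dK, hdK0, ?_, ?_, ?_, ?_⟩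
  · refine le_antisymm (extS_le_iff.2 inf_le_left) ?_
    intro x hx
    obtain ⟨s, hs, hmem⟩ := hsx x hx
    have hxE : algebraMap R (FractionRing R) s * x ∈ extS (Localization S) I :=
      le_resS_extS I hmem
    have hu : IsUnit (algebraMap R (Localization S) s) :=
      IsLocalization.map_units (Localization S) ⟨s, hs⟩
    have hx2 : algebraMap R (FractionRing R) s * x = (algebraMap R (Localization S) s) • x := by
      rw [algebraMap_smul, Algebra.smul_def]
    have h3 := (extS (Localization S) I).smul_mem
      ((hu.unit⁻¹ : (Localization S)ˣ) : Localization S) hxE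
    have h4 : ((hu.unit⁻¹ : (Localization S)ˣ) : Localization S) •
        (algebraMap R (FractionRing R) s * x) = x := by
      rw [hx2, smul_smul, IsUnit.val_inv_mul hu, one_smul]
    rwa [h4] at h3
  · obtain ⟨x', hx', hx0⟩ := Submodule.exists_mem_ne_zero_of_ne_bot hb
    have hxd : dK * x' ∈ dK • X := by
      have := Submodule.smul_mem_pointwise_smul x' dK X hx'
      rwa [smul_eq_mul] at this
    obtain ⟨s, hs, hmem⟩ := hsx _ hxd
    intro hbot
    rw [hbot, Submodule.mem_bot] at hmem
    exact (mul_ne_zero (algebraMap_R_K_ne_zero (s_nzd hS hs))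
      (mul_ne_zero hdK0 hx0)) hmem
  · refine ⟨1, Submonoid.one_mem _, fun b hbI => ?_⟩
    obtain ⟨z, hz⟩ := Submodule.mem_one.1 (Submodule.mem_inf.1 hbI).2
    exact ⟨z, by rw [one_smul]; exact hz⟩
  · refine le_antisymm (iSup₂_le fun J hJ => ?_) (le_tOp _)
    have h1 := Hv_loc hS J hJ.2.1 hJ.1
    have h2 : vOp (Localization S) (FractionRing R) (extS (Localization S) J) ≤
        tOp (Localization S) (FractionRing R) (dK • X) :=
      vOp_le_tOp (fun h => hJ.1 (extS_bot_iff.1 h)) (extS_fg hJ.2.1)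
        (extS_le_iff.2 (hJ.2.2.trans inf_le_left))
    have h3 : tOp (Localization S) (FractionRing R) (dK • X) = dK • X := by
      rw [tOp_smul hdK0, ht]
    have h4 : vOp R (FractionRing R) J ≤ resS R (dK • X) := by
      refine h1.trans ?_
      intro x hx
      rw [mem_resS] at hx ⊢
      rw [← h3]
      exact h2 hx
    have h5 : vOp R (FractionRing R) J ≤ (1 : Submodule R (FractionRing R)) :=
      (vOp_mono (hJ.2.2.trans inf_le_right)).trans_eq vOp_one
    exact le_inf h4 h5

end LocCase

end Prop25

/-- **Proposition 2.5.** Let `R` be a Clifford (resp. Boole) `t`-regular domain. Then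
(1) `R_S` is Clifford (resp. Boole) `t`-regular for any multiplicative subset `S` of `R`;
(2) `(I_v : I_v)` is Clifford (resp. Boole) `t`-regular for any nonzero ideal `I` of `R`. -/
theorem cliffordTRegular_localization_and_stabRing (R : Type*) [CommRing R] [IsDomain R] :
    (IsCliffordTRegular R →
      ((∀ S : Submonoid R, (0 : R) ∉ S → IsCliffordTRegular (Localization S)) ∧
       (∀ I : Ideal R, I ≠ ⊥ →
         IsCliffordTRegular ↥(stabRing R (vOp R (FractionRing R) (idealToFrac R I)))))) ∧
    (IsBooleTRegular R →
      ((∀ S : Submonoid R, (0 : R) ∉ S → IsBooleTRegular (Localization S)) ∧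
       (∀ I : Ideal R, I ≠ ⊥ →
         IsBooleTRegular ↥(stabRing R (vOp R (FractionRing R) (idealToFrac R I)))))) := by
  have locSetup : ∀ S : Submonoid R, (0 : R) ∉ S → S ≤ nonZeroDivisors R :=
    fun S hS0 s hs => mem_nonZeroDivisors_of_ne_zero (fun h => hS0 (h ▸ hs))
  have stabNeBot : ∀ I : Ideal R, I ≠ ⊥ → idealToFrac R I ≠ ⊥ := by
    intro I hI0 h
    obtain ⟨r, hr, hr0⟩ := Submodule.exists_mem_ne_zero_of_ne_bot hI0
    have hmem : algebraMap R (FractionRing R) r ∈ idealToFrac R I :=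
      Submodule.mem_map_of_mem hr
    rw [h, Submodule.mem_bot] at hmem
    exact Prop25.algebraMap_R_K_ne_zero (mem_nonZeroDivisors_of_ne_zero hr0) hmem
  have stabLeOne : ∀ I : Ideal R, idealToFrac R I ≤ (1 : Submodule R (FractionRing R)) := by
    rintro I x ⟨r, hr, rfl⟩
    exact Submodule.mem_one.2 ⟨r, rfl⟩
  constructor
  · intro hcliff
    constructor
    · intro S hS0
      have hS' := locSetup S hS0
      letI : Algebra (Localization S) (FractionRing R) :=
        (Localization.mapToFractionRing (FractionRing R) S (Localization S) hS'
          ).toRingHom.toAlgebra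
      haveI : IsScalarTower R (Localization S) (FractionRing R) :=
        IsScalarTower.of_algebraMap_eq fun r =>
          ((Localization.mapToFractionRing (FractionRing R) S (Localization S) hS'
            ).commutes r).symm
      haveI : IsDomain (Localization S) := IsLocalization.isDomain_localization hS'
      haveI : IsFractionRing (Localization S) (FractionRing R) :=
        Prop25.isFractionRing_of_tower (Prop25.loc_algebraMap_injective hS0)
      exact Prop25.isCliffordTRegular_of_equiv
        (FractionRing.algEquiv (Localization S) (FractionRing R))
        (fun X hb hfrac ht => Prop25.master_clifford
          (Prop25.loc_algebraMap_injective hS0) (Prop25.Hv_loc hS0)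
          (Prop25.HX_loc hS0) hcliff X hb hfrac ht)
    · intro I hI0
      haveI : IsDomain ↥(stabRing R (vOp R (FractionRing R) (idealToFrac R I))) :=
        Function.Injective.isDomain _ (Prop25.stab_algebraMap_injective (idealToFrac R I))
      haveI : IsFractionRing ↥(stabRing R (vOp R (FractionRing R) (idealToFrac R I)))
          (FractionRing R) :=
        Prop25.isFractionRing_of_tower (Prop25.stab_algebraMap_injective (idealToFrac R I))
      exact Prop25.isCliffordTRegular_of_equiv
        (FractionRing.algEquiv _ (FractionRing R))
        (fun X hb hfrac ht => Prop25.master_clifford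
          (Prop25.stab_algebraMap_injective (idealToFrac R I))
          (fun M _ _ => Prop25.Hv_stab (idealToFrac R I) M)
          (Prop25.HX_stab (stabNeBot I hI0) (stabLeOne I)) hcliff X hb hfrac ht)
  · intro hboole
    constructor
    · intro S hS0
      have hS' := locSetup S hS0
      letI : Algebra (Localization S) (FractionRing R) :=
        (Localization.mapToFractionRing (FractionRing R) S (Localization S) hS'
          ).toRingHom.toAlgebra
      haveI : IsScalarTower R (Localization S) (FractionRing R) :=
        IsScalarTower.of_algebraMap_eq fun r =>
          ((Localization.mapToFractionRing (FractionRing R) S (Localization S) hS'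
            ).commutes r).symm
      haveI : IsDomain (Localization S) := IsLocalization.isDomain_localization hS'
      haveI : IsFractionRing (Localization S) (FractionRing R) :=
        Prop25.isFractionRing_of_tower (Prop25.loc_algebraMap_injective hS0)
      exact Prop25.isBooleTRegular_of_equiv
        (FractionRing.algEquiv (Localization S) (FractionRing R))
        (fun X hb hfrac ht => Prop25.master_boole (Prop25.Hv_loc hS0)
          (Prop25.HX_loc hS0) hboole X hb hfrac ht)
    · intro I hI0
      haveI : IsDomain ↥(stabRing R (vOp R (FractionRing R) (idealToFrac R I))) :=
        Function.Injective.isDomain _ (Prop25.stab_algebraMap_injective (idealToFrac R I))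
      haveI : IsFractionRing ↥(stabRing R (vOp R (FractionRing R) (idealToFrac R I)))
          (FractionRing R) :=
        Prop25.isFractionRing_of_tower (Prop25.stab_algebraMap_injective (idealToFrac R I))
      exact Prop25.isBooleTRegular_of_equiv
        (FractionRing.algEquiv _ (FractionRing R))
        (fun X hb hfrac ht => Prop25.master_boole
          (fun M _ _ => Prop25.Hv_stab (idealToFrac R I) M)
          (Prop25.HX_stab (stabNeBot I hI0) (stabLeOne I)) hboole X hb hfrac ht)
end

section
/- Let R be a PVMD and I a nonzero fractional ideal of R. Then for every t-prime ideal P of R, I_t R_P = I R_P. -/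
open Pointwise

variable (R : Type*) [CommRing R]

section MyAux

section Aux
variable {R : Type*} [CommRing R] {K : Type*} [CommRing K] [Algebra R K]

lemma auxDivAnti {I J : Submodule R K} (h : I ≤ J) : 1 / J ≤ 1 / I := by
  intro x hx
  rw [Submodule.mem_div_iff_forall_mul_mem] at hx ⊢
  exact fun y hy => hx y (h hy)

lemma auxLeV (I : Submodule R K) : I ≤ vOp R K I := by
  intro x hx
  rw [vOp, Submodule.mem_div_iff_forall_mul_mem]
  intro y hy
  rw [Submodule.mem_div_iff_forall_mul_mem] at hy
  rw [mul_comm]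
  exact hy x hx

lemma auxVMono {I J : Submodule R K} (h : I ≤ J) : vOp R K I ≤ vOp R K J :=
  auxDivAnti (auxDivAnti h)

lemma auxTripleDiv (I : Submodule R K) : 1 / (1 / (1 / I)) = 1 / I :=
  le_antisymm (auxDivAnti (auxLeV I)) (auxLeV (1 / I))

lemma auxVIdem (I : Submodule R K) : vOp R K (vOp R K I) = vOp R K I := by
  unfold vOp
  rw [auxTripleDiv (1/I)]

lemma auxOneDivOne : (1 : Submodule R K) / 1 = 1 := by
  apply le_antisymm
  · intro x hx
    rw [Submodule.mem_div_iff_forall_mul_mem] at hx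
    simpa using hx 1 (Submodule.mem_one.mpr ⟨1, map_one _⟩)
  · intro x hx
    rw [Submodule.mem_div_iff_forall_mul_mem]
    intro y hy
    obtain ⟨r, rfl⟩ := Submodule.mem_one.mp hx
    obtain ⟨s, rfl⟩ := Submodule.mem_one.mp hy
    exact Submodule.mem_one.mpr ⟨r * s, by rw [map_mul]⟩

lemma auxVOne : vOp R K (1 : Submodule R K) = 1 := by
  rw [vOp, auxOneDivOne, auxOneDivOne]

lemma auxVLeOne {I : Submodule R K} (h : I ≤ 1) : vOp R K I ≤ 1 :=
  auxVOne (R := R) (K := K) ▸ auxVMono h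

lemma auxVLeT {I J : Submodule R K} (hJ : J ≠ ⊥) (hfg : J.FG) (hle : J ≤ I) :
    vOp R K J ≤ tOp R K I := by
  rw [tOp]
  exact le_iSup_of_le J (le_iSup_of_le ⟨hJ, hfg, hle⟩ le_rfl)

lemma auxTLeOne {I : Submodule R K} (h : I ≤ 1) : tOp R K I ≤ 1 := by
  rw [tOp]
  exact iSup₂_le fun J hJ => auxVLeOne (hJ.2.2.trans h)

lemma auxLeT {I : Submodule R K} (hI : I ≠ ⊥) : I ≤ tOp R K I := by
  obtain ⟨x₀, hx₀, hx₀0⟩ := Submodule.exists_mem_ne_zero_of_ne_bot hI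
  intro x hx
  have hJ : Submodule.span R {x, x₀} ≤ I := by
    rw [Submodule.span_le]
    rintro y (rfl | rfl) <;> assumption
  have hJ0 : Submodule.span R {x, x₀} ≠ ⊥ := by
    intro h
    rw [Submodule.span_eq_bot] at h
    exact hx₀0 (h x₀ (by simp))
  exact auxVLeT hJ0 (Submodule.fg_span (Set.toFinite _)) hJ
    (auxLeV _ (Submodule.subset_span (by simp)))

lemma auxMemT {I : Submodule R K} (hI : I ≠ ⊥) {x : K} :
    x ∈ tOp R K I ↔ ∃ J : Submodule R K, J ≠ ⊥ ∧ J.FG ∧ J ≤ I ∧ x ∈ vOp R K J := by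
  constructor
  · intro hx
    obtain ⟨x₀, hx₀, hx₀0⟩ := Submodule.exists_mem_ne_zero_of_ne_bot hI
    set S := {J : Submodule R K | J ≠ ⊥ ∧ J.FG ∧ J ≤ I}
    haveI : Nonempty S := ⟨⟨Submodule.span R {x₀}, by
        simpa using hx₀0, Submodule.fg_span_singleton x₀, by
        rw [Submodule.span_le]; simpa using hx₀⟩⟩
    have hdir : Directed (· ≤ ·) (fun J : S => vOp R K (J : Submodule R K)) := by
      rintro ⟨J₁, h₁0, h₁fg, h₁le⟩ ⟨J₂, h₂0, h₂fg, h₂le⟩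
      refine ⟨⟨J₁ ⊔ J₂, ?_, h₁fg.sup h₂fg, sup_le h₁le h₂le⟩,
        auxVMono le_sup_left, auxVMono le_sup_right⟩
      intro h
      exact h₁0 (le_bot_iff.mp (h ▸ le_sup_left))
    rw [tOp, iSup_subtype'] at hx
    obtain ⟨⟨J, hJ⟩, hxJ⟩ := (Submodule.mem_iSup_of_directed _ hdir).mp hx
    exact ⟨J, hJ.1, hJ.2.1, hJ.2.2, hxJ⟩
  · rintro ⟨J, h0, hfg, hle, hx⟩
    exact auxVLeT h0 hfg hle hx

lemma auxTIdem (I : Submodule R K) : tOp R K (tOp R K I) = tOp R K I := by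
  by_cases hI : I = ⊥
  · subst hI
    have hbot : tOp R K (⊥ : Submodule R K) = ⊥ := by
      apply le_antisymm _ bot_le
      rw [tOp]
      apply iSup₂_le
      rintro J ⟨hJ0, -, hJle⟩
      exact absurd (le_bot_iff.mp hJle) hJ0
    rw [hbot, hbot]
  · apply le_antisymm _ (auxLeT (fun h => hI (le_bot_iff.mp (h ▸ auxLeT hI))))
    intro x hx
    have hTne : tOp R K I ≠ ⊥ := fun h => hI (le_bot_iff.mp (h ▸ auxLeT hI))
    obtain ⟨J, hJ0, hJfg, hJle, hxJ⟩ := (auxMemT hTne).mp hx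
    obtain ⟨T, hT⟩ := hJfg
    -- each generator lies in some vOp of a fg nonzero subideal of I
    have hgen : ∀ y ∈ (T : Set K), ∃ Jy : Submodule R K,
        Jy ≠ ⊥ ∧ Jy.FG ∧ Jy ≤ I ∧ y ∈ vOp R K Jy := by
      intro y hy
      exact (auxMemT hI).mp (hJle (hT ▸ Submodule.subset_span hy))
    choose! Jy hJy0 hJyfg hJyle hJymem using hgen
    obtain ⟨x₀, hx₀, hx₀0⟩ := Submodule.exists_mem_ne_zero_of_ne_bot hI
    set J' : Submodule R K := (T.sup Jy) ⊔ Submodule.span R {x₀} with hJ'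
    have hJ'0 : J' ≠ ⊥ := by
      intro h
      have : Submodule.span R {x₀} ≤ ⊥ := h ▸ le_sup_right
      exact hx₀0 (by simpa using Submodule.span_le.mp this rfl)
    have hJ'fg : J'.FG := Submodule.FG.sup
      (Finset.sup_induction Submodule.fg_bot (fun a ha b hb => ha.sup hb)
        (fun y hy => hJyfg y hy)) (Submodule.fg_span_singleton x₀)
    have hJ'le : J' ≤ I := by
      apply sup_le _ (by rw [Submodule.span_le]; simpa using hx₀)
      apply Finset.sup_le
      intro y hy
      exact hJyle y hy
    have hJle' : J ≤ vOp R K J' := by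
      rw [← hT, Submodule.span_le]
      intro y hy
      exact auxVMono (le_trans (Finset.le_sup hy) le_sup_left) (hJymem y hy)
    have : x ∈ vOp R K J' := by
      have := auxVMono hJle' hxJ
      rwa [auxVIdem] at this
    exact auxVLeT hJ'0 hJ'fg hJ'le this

end Aux

section AuxSmul
variable {R : Type*} [CommRing R] {K : Type*} [Field K] [Algebra R K]

lemma auxMemSmul {c x : K} {S : Submodule R K} : x ∈ c • S ↔ ∃ y ∈ S, c * y = x :=
  Iff.rfl

lemma auxDivSmul {c : K} (hc : c ≠ 0) (J : Submodule R K) :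
    (1 : Submodule R K) / (c • J) = c⁻¹ • (1 / J) := by
  ext x
  rw [Submodule.mem_div_iff_forall_mul_mem, auxMemSmul]
  constructor
  · intro h
    refine ⟨c * x, ?_, by field_simp⟩
    rw [Submodule.mem_div_iff_forall_mul_mem]
    intro y hy
    have := h (c * y) (auxMemSmul.mpr ⟨y, hy, rfl⟩)
    rwa [show x * (c * y) = c * x * y by ring] at this
  · rintro ⟨z, hz, rfl⟩ y hy
    obtain ⟨w, hw, rfl⟩ := auxMemSmul.mp hy
    rw [Submodule.mem_div_iff_forall_mul_mem] at hz
    have := hz w hw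
    have heq : c⁻¹ * z * (c * w) = z * w := by
      field_simp
    rwa [heq]
  
lemma auxVSmul {c : K} (hc : c ≠ 0) (J : Submodule R K) :
    vOp R K (c • J) = c • vOp R K J := by
  rw [vOp, vOp, auxDivSmul hc, auxDivSmul (inv_ne_zero hc), inv_inv]

lemma auxSmulFG {c : K} {J : Submodule R K} (h : J.FG) : (c • J).FG := by
  obtain ⟨T, hT⟩ := h
  rw [← hT, Submodule.smul_span]
  exact Submodule.fg_span ((T : Set K).toFinite.smul_set)

lemma auxSmulNeBot {c : K} (hc : c ≠ 0) {J : Submodule R K} (h : J ≠ ⊥) : c • J ≠ ⊥ := by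
  obtain ⟨x, hx, hx0⟩ := Submodule.exists_mem_ne_zero_of_ne_bot h
  rw [Submodule.ne_bot_iff]
  exact ⟨c * x, auxMemSmul.mpr ⟨x, hx, rfl⟩, mul_ne_zero hc hx0⟩

end AuxSmul

section AuxFrac
variable {R : Type*} [CommRing R] [IsDomain R]

lemma auxMemIdealToFrac {A : Ideal R} {x : FractionRing R} :
    x ∈ idealToFrac R A ↔ ∃ a ∈ A, algebraMap R (FractionRing R) a = x := by
  simp [idealToFrac, Submodule.mem_map, Algebra.linearMap_apply]

lemma auxIdealToFracLeOne (A : Ideal R) : idealToFrac R A ≤ 1 := by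
  intro x hx
  obtain ⟨a, -, rfl⟩ := auxMemIdealToFrac.mp hx
  exact Submodule.mem_one.mpr ⟨a, rfl⟩

lemma auxIdealToFracNeBot {A : Ideal R} (hA : A ≠ ⊥) : idealToFrac R A ≠ ⊥ := by
  obtain ⟨a, ha, ha0⟩ := Submodule.exists_mem_ne_zero_of_ne_bot hA
  rw [Submodule.ne_bot_iff]
  refine ⟨algebraMap R (FractionRing R) a, auxMemIdealToFrac.mpr ⟨a, ha, rfl⟩, ?_⟩
  simpa using ha0

lemma auxIdealToFracMono {A B : Ideal R} (h : A ≤ B) : idealToFrac R A ≤ idealToFrac R B :=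
  Submodule.map_mono h

/-- Every `t`-prime is contained in a `t`-maximal ideal. -/
lemma auxExistsTMax {P : Ideal R} (hP : IsTPrime R P) : ∃ M, IsTMaximal R M ∧ P ≤ M := by
  classical
  set T : Set (Ideal R) := {B | B ≠ ⊤ ∧ IsTIdeal R B ∧ P ≤ B} with hT
  have hPT : P ∈ T := ⟨hP.isPrime.ne_top, hP.isT, le_rfl⟩
  have hchain : ∀ c ⊆ T, IsChain (· ≤ ·) c → ∀ y ∈ c, ∃ ub ∈ T, ∀ z ∈ c, z ≤ ub := by
    intro c hsub hc y hy
    refine ⟨sSup c, ⟨?_, ?_, le_trans (hsub hy).2.2 (le_sSup hy)⟩, fun z hz => le_sSup hz⟩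
    · -- sSup c ≠ ⊤
      intro htop
      haveI : Nonempty c := ⟨⟨y, hy⟩⟩
      have h1 : (1 : R) ∈ sSup c := htop ▸ Submodule.mem_top
      rw [sSup_eq_iSup'] at h1
      obtain ⟨⟨B, hB⟩, h1B⟩ := (Submodule.mem_iSup_of_directed _
        (directedOn_iff_directed.mp hc.directedOn)).mp h1
      exact (hsub hB).1 ((Ideal.eq_top_iff_one B).mpr h1B)
    · -- IsTIdeal (sSup c)
      have hne : idealToFrac R (sSup c) ≠ ⊥ :=
        auxIdealToFracNeBot (fun h => hP.ne_bot (le_bot_iff.mp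
          (h ▸ le_trans (hsub hy).2.2 (le_sSup hy))))
      refine le_antisymm ?_ (auxLeT hne)
      intro x hx
      obtain ⟨J, hJ0, hJfg, hJle, hxJ⟩ := (auxMemT hne).mp hx
      haveI : Nonempty c := ⟨⟨y, hy⟩⟩
      have heq : idealToFrac R (sSup c) = ⨆ B : c, idealToFrac R (B : Ideal R) := by
        rw [sSup_eq_iSup', idealToFrac, Submodule.map_iSup]
        rfl
      have hcompact := (Submodule.fg_iff_compact J).mp hJfg
      rw [CompleteLattice.isCompactElement_iff_le_of_directed_sSup_le] at hcompact
      obtain ⟨X, ⟨B, rfl⟩, hJB⟩ := hcompact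
        (Set.range fun B : c => idealToFrac R (B : Ideal R))
        (Set.range_nonempty _)
        (by
          rintro X ⟨B₁, rfl⟩ Y ⟨B₂, rfl⟩
          rcases hc.total B₁.2 B₂.2 with h | h
          · exact ⟨_, ⟨B₂, rfl⟩, auxIdealToFracMono h, le_rfl⟩
          · exact ⟨_, ⟨B₁, rfl⟩, le_rfl, auxIdealToFracMono h⟩)
        (by rw [sSup_range, ← heq]; exact hJle)
      have hBt : IsTIdeal R (B : Ideal R) := (hsub B.2).2.1
      have hx' : x ∈ idealToFrac R (B : Ideal R) := by
        have := auxVLeT hJ0 hJfg hJB hxJ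
        rwa [hBt] at this
      exact auxIdealToFracMono (le_sSup B.2) hx'
  obtain ⟨M, hPM, hM⟩ := zorn_le_nonempty₀ T hchain P hPT
  have hMT : M ∈ T := hM.prop
  have hMne : M ≠ ⊥ := fun h => hP.ne_bot (le_bot_iff.mp (h ▸ hPM))
  -- M is prime
  have hprime : M.IsPrime := by
    refine ⟨hMT.1, ?_⟩
    intro a b hab
    by_cases ha : a ∈ M
    · exact Or.inl ha
    right
    by_cases hb0 : b = 0
    · rw [hb0]; exact zero_mem M
    set A : Ideal R := M ⊔ Ideal.span {a} with hA
    have hAne : A ≠ ⊥ := fun h => hMne (le_bot_iff.mp (h ▸ (le_sup_left : M ≤ A)))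
    have hfracAne : idealToFrac R A ≠ ⊥ := auxIdealToFracNeBot hAne
    have h1 : (1 : FractionRing R) ∈ tOp R (FractionRing R) (idealToFrac R A) := by
      by_contra h1
      set B : Ideal R := Submodule.comap (Algebra.linearMap R (FractionRing R))
        (tOp R (FractionRing R) (idealToFrac R A)) with hB
      have hAB : A ≤ B := by
        intro z hz
        exact auxLeT hfracAne (auxMemIdealToFrac.mpr ⟨z, hz, rfl⟩)
      have hBfrac : idealToFrac R B = tOp R (FractionRing R) (idealToFrac R A) := by
        apply le_antisymm (Submodule.map_comap_le _ _)
        intro x hx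
        obtain ⟨r, rfl⟩ := Submodule.mem_one.mp (auxTLeOne (auxIdealToFracLeOne A) hx)
        exact auxMemIdealToFrac.mpr ⟨r, hx, rfl⟩
      have hBT : B ∈ T := by
        refine ⟨?_, ?_, le_trans hMT.2.2 (le_trans le_sup_left hAB)⟩
        · intro h
          apply h1
          have : (1 : R) ∈ B := h ▸ Submodule.mem_top
          simpa using (Submodule.mem_comap.mp this)
        · show tOp R (FractionRing R) (idealToFrac R B) = idealToFrac R B
          rw [hBfrac, auxTIdem]
      have hBM : B ≤ M := hM.2 hBT (le_trans le_sup_left hAB)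
      exact ha (hBM (hAB (Ideal.mem_sup_right (Ideal.subset_span rfl))))
    obtain ⟨J, hJ0, hJfg, hJle, h1J⟩ := (auxMemT hfracAne).mp h1
    set β : FractionRing R := algebraMap R (FractionRing R) b with hβdef
    have hβ : β ≠ 0 := fun h => hb0 (IsFractionRing.injective R (FractionRing R)
      (by rw [map_zero]; exact h))
    have hβJle : β • J ≤ idealToFrac R M := by
      intro x hx
      obtain ⟨y, hy, rfl⟩ := auxMemSmul.mp hx
      obtain ⟨z, hzA, rfl⟩ := auxMemIdealToFrac.mp (hJle hy)
      refine auxMemIdealToFrac.mpr ⟨b * z, ?_, by rw [map_mul]⟩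
      obtain ⟨m, hm, w, hw, rfl⟩ := Submodule.mem_sup.mp hzA
      obtain ⟨r, rfl⟩ := Ideal.mem_span_singleton'.mp hw
      have : b * (m + r * a) = b * m + r * (a * b) := by ring
      rw [this]
      exact add_mem (Ideal.mul_mem_left M b hm) (Ideal.mul_mem_left M r hab)
    have hmem : β ∈ idealToFrac R M := by
      have h2 : β ∈ vOp R (FractionRing R) (β • J) := by
        rw [auxVSmul hβ]
        exact auxMemSmul.mpr ⟨1, h1J, mul_one β⟩
      have h3 : vOp R (FractionRing R) (β • J) ≤ idealToFrac R M := by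
        have := auxVLeT (auxSmulNeBot hβ hJ0) (auxSmulFG hJfg) hβJle
        rwa [show tOp R (FractionRing R) (idealToFrac R M) = idealToFrac R M
          from hMT.2.1] at this
      exact h3 h2
    obtain ⟨m, hm, hme⟩ := auxMemIdealToFrac.mp hmem
    rwa [IsFractionRing.injective R (FractionRing R) hme] at hm
  refine ⟨M, ⟨hMne, hMT.1, hprime, hMT.2.1, ?_⟩, hPM⟩
  intro J hJtop hJt hMJ
  exact le_antisymm (hM.2 ⟨hJtop, hJt, hPM.trans hMJ⟩ hMJ) hMJ

end AuxFrac
section AuxVal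
variable {R : Type*} [CommRing R] [IsDomain R]

/-- Comparability with respect to `R_P`: in a PVMD, for every `t`-prime `P` and
`x y` in the fraction field, `x ∈ y R_P` or `y ∈ x R_P`. -/
lemma auxTotal (hR : IsPVMD R) {P : Ideal R} (hP : IsTPrime R P) (x y : FractionRing R) :
    (∃ s ∉ P, ∃ r : R, algebraMap R (FractionRing R) s * x = algebraMap R (FractionRing R) r * y)
    ∨ (∃ s ∉ P, ∃ r : R,
        algebraMap R (FractionRing R) s * y = algebraMap R (FractionRing R) r * x) := by
  obtain ⟨M, hM, hPM⟩ := auxExistsTMax hP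
  haveI := hM.isPrime
  haveI : IsDomain (Localization.AtPrime M) := IsLocalization.isDomain_of_local_atPrime hM.isPrime
  have hval : ValuationRing (Localization.AtPrime M) := hR M hM
  revert x y
  set K := FractionRing R
  set A := Localization.AtPrime M
  intro x y
  obtain ⟨⟨p, q⟩, hx⟩ := IsLocalization.mk'_surjective (nonZeroDivisors R) x
  obtain ⟨⟨u, v⟩, hy⟩ := IsLocalization.mk'_surjective (nonZeroDivisors R) y
  have hxq : x * algebraMap R K (q : R) = algebraMap R K p := by
    rw [← hx]; exact IsLocalization.mk'_spec _ p q
  have hyv : y * algebraMap R K (v : R) = algebraMap R K u := by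
    rw [← hy]; exact IsLocalization.mk'_spec _ u v
  have hqv : algebraMap R K ((q : R) * (v : R)) ≠ 0 :=
    IsFractionRing.to_map_ne_zero_of_mem_nonZeroDivisors (mul_mem q.2 v.2)
  obtain ⟨c, hc | hc⟩ := ValuationRing.cond
    (algebraMap R A (p * (v : R))) (algebraMap R A (u * (q : R)))
  · -- (p v) c = u q : y ∈ x R_P
    obtain ⟨⟨r, s⟩, rfl⟩ := IsLocalization.mk'_surjective M.primeCompl c
    have hc' : algebraMap R A (p * (v : R) * r) = algebraMap R A (u * (q : R) * (s : R)) := by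
      have := congrArg (· * algebraMap R A (s : R)) hc
      simpa [mul_assoc, IsLocalization.mk'_spec, map_mul] using this
    obtain ⟨t, ht⟩ := (IsLocalization.eq_iff_exists M.primeCompl A).mp hc'
    refine Or.inr ⟨(t : R) * (s : R), fun hmem => (mul_mem t.2 s.2 : _ ∈ M.primeCompl)
      (hPM hmem), (t : R) * r, ?_⟩
    apply mul_right_cancel₀ hqv
    have e1 : algebraMap R K ((t : R) * (s : R)) * y * algebraMap R K ((q : R) * (v : R))
        = algebraMap R K ((t : R) * (u * (q : R) * (s : R))) := by
      rw [map_mul, map_mul, map_mul, map_mul, map_mul, ← hyv]; ring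
    have e2 : algebraMap R K ((t : R) * r) * x * algebraMap R K ((q : R) * (v : R))
        = algebraMap R K ((t : R) * (p * (v : R) * r)) := by
      rw [map_mul, map_mul, map_mul, map_mul, map_mul, ← hxq]; ring
    rw [e1, e2, ht]
  · -- (u q) c = p v : x ∈ y R_P
    obtain ⟨⟨r, s⟩, rfl⟩ := IsLocalization.mk'_surjective M.primeCompl c
    have hc' : algebraMap R A (u * (q : R) * r) = algebraMap R A (p * (v : R) * (s : R)) := by
      have := congrArg (· * algebraMap R A (s : R)) hc
      simpa [mul_assoc, IsLocalization.mk'_spec, map_mul] using this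
    obtain ⟨t, ht⟩ := (IsLocalization.eq_iff_exists M.primeCompl A).mp hc'
    refine Or.inl ⟨(t : R) * (s : R), fun hmem => (mul_mem t.2 s.2 : _ ∈ M.primeCompl)
      (hPM hmem), (t : R) * r, ?_⟩
    apply mul_right_cancel₀ hqv
    have e1 : algebraMap R K ((t : R) * (s : R)) * x * algebraMap R K ((q : R) * (v : R))
        = algebraMap R K ((t : R) * (p * (v : R) * (s : R))) := by
      rw [map_mul, map_mul, map_mul, map_mul, map_mul, ← hxq]; ring
    have e2 : algebraMap R K ((t : R) * r) * y * algebraMap R K ((q : R) * (v : R))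
        = algebraMap R K ((t : R) * (u * (q : R) * r)) := by
      rw [map_mul, map_mul, map_mul, map_mul, map_mul, ← hyv]; ring
    rw [e1, e2, ht]

end AuxVal
lemma auxFinsetMax {α : Type*} [Zero α] [DecidableEq α] (rel : α → α → Prop)
    (htot : ∀ x y, rel x y ∨ rel y x)
    (htrans : ∀ x y z, rel x y → rel y z → rel x z)
    (hzero : ∀ y, rel 0 y) :
    ∀ T : Finset α, (∃ y ∈ T, y ≠ 0) → ∃ m ∈ T, m ≠ 0 ∧ ∀ y ∈ T, rel y m := by
  classical
  intro T
  induction T using Finset.induction_on with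
  | empty => rintro ⟨y, hy, -⟩; exact absurd hy (Finset.notMem_empty y)
  | insert _ _ hnotmem =>
    rename_i a T ih
    intro hT
    by_cases hT' : ∃ y ∈ T, y ≠ 0
    · obtain ⟨m, hmT, hm0, hrel⟩ := ih hT'
      by_cases ha0 : a = 0
      · refine ⟨m, Finset.mem_insert_of_mem hmT, hm0, ?_⟩
        intro y hy
        rcases Finset.mem_insert.mp hy with rfl | hy
        · exact ha0 ▸ hzero m
        · exact hrel y hy
      · rcases htot a m with h | h
        · refine ⟨m, Finset.mem_insert_of_mem hmT, hm0, ?_⟩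
          intro y hy
          rcases Finset.mem_insert.mp hy with rfl | hy
          · exact h
          · exact hrel y hy
        · refine ⟨a, Finset.mem_insert_self a T, ha0, ?_⟩
          intro y hy
          rcases Finset.mem_insert.mp hy with rfl | hy
          · rcases htot y y with h' | h' <;> exact h'
          · exact htrans y m a (hrel y hy) h
    · push_neg at hT'
      obtain ⟨y, hy, hy0⟩ := hT
      have ha0 : a ≠ 0 := by
        rcases Finset.mem_insert.mp hy with rfl | hy'
        · exact hy0
        · exact absurd (hT' y hy') hy0
      refine ⟨a, Finset.mem_insert_self a T, ha0, ?_⟩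
      intro z hz
      rcases Finset.mem_insert.mp hz with rfl | hz
      · rcases htot z z with h' | h' <;> exact h'
      · exact (hT' z hz) ▸ hzero a

section AuxKey
variable {R : Type*} [CommRing R] [IsDomain R]

/-- In a PVMD, every nonzero finitely generated (fractional) ideal `J` is locally
invertible at every `t`-prime `P`: `J J⁻¹` contains some `s ∉ P`. -/
lemma auxKey (hR : IsPVMD R) {P : Ideal R} (hP : IsTPrime R P)
    {J : Submodule R (FractionRing R)} (hJ0 : J ≠ ⊥) (hJfg : J.FG) :
    ∃ s : R, s ∉ P ∧ algebraMap R (FractionRing R) s ∈ J * ((1 : Submodule R (FractionRing R)) / J) := by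
  classical
  obtain ⟨T, hT⟩ := hJfg
  have hTne : ∃ y ∈ T, y ≠ 0 := by
    by_contra h
    push_neg at h
    apply hJ0
    rw [← hT, Submodule.span_eq_bot]
    exact fun x hx => h x hx
  set rel : FractionRing R → FractionRing R → Prop := fun x y =>
    ∃ s, s ∉ P ∧ ∃ r : R, algebraMap R (FractionRing R) s * x
      = algebraMap R (FractionRing R) r * y with hreldef
  have htot : ∀ x y, rel x y ∨ rel y x := by
    intro x y
    rcases auxTotal hR hP x y with ⟨s, hs, r, h⟩ | ⟨s, hs, r, h⟩
    · exact Or.inl ⟨s, hs, r, h⟩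
    · exact Or.inr ⟨s, hs, r, h⟩
  have htrans : ∀ x y z, rel x y → rel y z → rel x z := by
    rintro x y z ⟨s₁, hs₁, r₁, e₁⟩ ⟨s₂, hs₂, r₂, e₂⟩
    refine ⟨s₂ * s₁, ?_, r₁ * r₂, ?_⟩
    · intro h
      rcases hP.isPrime.mem_or_mem h with h | h
      · exact hs₂ h
      · exact hs₁ h
    · rw [map_mul, map_mul]
      calc algebraMap R (FractionRing R) s₂ * algebraMap R (FractionRing R) s₁ * x
          = algebraMap R (FractionRing R) s₂ * (algebraMap R (FractionRing R) s₁ * x) := by ring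
        _ = algebraMap R (FractionRing R) s₂ * (algebraMap R (FractionRing R) r₁ * y) := by
            rw [e₁]
        _ = algebraMap R (FractionRing R) r₁ * (algebraMap R (FractionRing R) s₂ * y) := by ring
        _ = algebraMap R (FractionRing R) r₁ * (algebraMap R (FractionRing R) r₂ * z) := by
            rw [e₂]
        _ = algebraMap R (FractionRing R) r₁ * algebraMap R (FractionRing R) r₂ * z := by ring
  have hzero : ∀ y, rel 0 y := by
    intro y
    refine ⟨1, fun h => hP.isPrime.ne_top (Ideal.eq_top_iff_one P |>.mpr h), 0, by simp⟩
  obtain ⟨m, hmT, hm0, hrel⟩ := auxFinsetMax rel htot htrans hzero T hTne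
  have hrel' : ∀ y ∈ T, ∃ s, s ∉ P ∧ ∃ r : R, algebraMap R (FractionRing R) s * y
      = algebraMap R (FractionRing R) r * m := fun y hy => hrel y hy
  choose! sf hsf rf hef using hrel'
  set S : R := ∏ y ∈ T, sf y with hSdef
  have hS : S ∉ P := by
    haveI := hP.isPrime
    intro h
    obtain ⟨y, hy, hyP⟩ := Ideal.IsPrime.prod_mem_iff.mp h
    exact hsf y hy hyP
  set c : FractionRing R := algebraMap R (FractionRing R) S * m⁻¹ with hcdef
  have hc : c ∈ (1 : Submodule R (FractionRing R)) / J := by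
    rw [Submodule.mem_div_iff_forall_mul_mem]
    have hle : J ≤ Submodule.comap (LinearMap.mulLeft R c) 1 := by
      rw [← hT, Submodule.span_le]
      intro y hyT
      have hyT' : y ∈ T := hyT
      show c * y ∈ (1 : Submodule R (FractionRing R))
      have hprod : algebraMap R (FractionRing R) S
          = algebraMap R (FractionRing R) (sf y) *
            algebraMap R (FractionRing R) (∏ x ∈ T.erase y, sf x) := by
        rw [← map_mul, hSdef, Finset.mul_prod_erase T sf hyT']
      have : c * y = algebraMap R (FractionRing R) ((∏ x ∈ T.erase y, sf x) * rf y) := by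
        rw [map_mul]
        calc c * y = (algebraMap R (FractionRing R) (sf y) * y) *
              algebraMap R (FractionRing R) (∏ x ∈ T.erase y, sf x) * m⁻¹ := by
                rw [hcdef, hprod]; ring
          _ = algebraMap R (FractionRing R) (rf y) *
              algebraMap R (FractionRing R) (∏ x ∈ T.erase y, sf x) * (m * m⁻¹) := by
                rw [hef y hyT']; ring
          _ = _ := by rw [mul_inv_cancel₀ hm0]; ring
      rw [this]
      exact Submodule.mem_one.mpr ⟨_, rfl⟩
    intro y hy
    have := hle hy
    rw [Submodule.mem_comap, LinearMap.mulLeft_apply] at this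
    exact this
  have hmJ : m ∈ J := hT ▸ Submodule.subset_span hmT
  have hfin : algebraMap R (FractionRing R) S = m * c := by
    rw [hcdef]
    field_simp
  exact ⟨S, hS, hfin ▸ Submodule.mul_mem_mul hmJ hc⟩

end AuxKey

end MyAux

/-- **Lemma 3.3.** Let `R` be a PVMD and `I` a nonzero fractional ideal of `R`. Then for every
`t`-prime ideal `P` of `R`, `I_t R_P = I R_P` (inside the quotient field). -/
theorem tOp_locSub_eq_locSub (R : Type*) [CommRing R] [IsDomain R] (hR : IsPVMD R)
    (I : Submodule R (FractionRing R)) (hI : IsFracIdeal R I)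
    (P : Ideal R) (hP : IsTPrime R P) :
    locSub R (@Ideal.primeCompl R _ P hP.isPrime) (tOp R (FractionRing R) I) =
      locSub R (@Ideal.primeCompl R _ P hP.isPrime) I := by
  haveI := hP.isPrime
  ext x
  constructor
  · rintro ⟨s₀, hs₀, hx⟩
    obtain ⟨J, hJ0, hJfg, hJle, hmem⟩ := (auxMemT hI.1).mp hx
    obtain ⟨s, hs, hsJ⟩ := auxKey hR hP hJ0 hJfg
    refine ⟨s * s₀, fun h => ?_, ?_⟩
    · rcases hP.isPrime.mem_or_mem h with h | h
      · exact hs h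
      · exact hs₀ h
    · have heq : ((s * s₀ : R)) • x = algebraMap R (FractionRing R) s * ((s₀ : R) • x) := by
        rw [mul_smul, Algebra.smul_def]
      show ((s * s₀ : R)) • x ∈ I
      rw [heq]
      have h1 : algebraMap R (FractionRing R) s * ((s₀ : R) • x) ∈
          (J * ((1 : Submodule R (FractionRing R)) / J)) * vOp R (FractionRing R) J :=
        Submodule.mul_mem_mul hsJ hmem
      have h2 : (J * ((1 : Submodule R (FractionRing R)) / J)) * vOp R (FractionRing R) J ≤ I := by
        rw [mul_assoc]
        have hdd : ((1 : Submodule R (FractionRing R)) / J) * vOp R (FractionRing R) J ≤ 1 := by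
          rw [Submodule.mul_le]
          intro a ha b hb
          rw [vOp, Submodule.mem_div_iff_forall_mul_mem] at hb
          rw [mul_comm]
          exact hb a ha
        calc J * (((1 : Submodule R (FractionRing R)) / J) * vOp R (FractionRing R) J)
            ≤ J * 1 := mul_le_mul_right hdd J
          _ = J := mul_one J
          _ ≤ I := hJle
      exact h2 h1
  · rintro ⟨s, hs, hsx⟩
    exact ⟨s, hs, auxLeT hI.1 hsx⟩
end
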